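/- arXiv:1704.04896 — 5 statements merged into one kernel-verified Lean document; each statement's English description precedes it below -/
import Mathlib

section
/- Discrete entropy inequality for the semi-discrete DG scheme (Theorem 2.1, first part). Along any differentiable solution t ↦ (ρ_i(t))_i of the semi-discrete scheme, the discrete entropy satisfies the exact identity dẼ/dt = − Σ_i (h_i/2) Σ_{r=1}^{k+1} w_r · f((ρ_i)_r) · ((u_i)_r)² − Σ_i (α_{i+½}/2) · ( g((ρ_{i+1})_1) − g((ρ_i)_{k+1}) ) · ( H′((ρ_{i+1})_1) − H′((ρ_i)_{k+1}) ). Since H′ is strictly increasing, g is nondecreasing, α_{i+½} ≥ 0 and f ≥ 0, this implies the discrete entropy–entropy dissipation inequality dẼ/dt ≤ −Ĩ, where Ĩ = Σ_i (h_i/2) Σ_r w_r f((ρ_i)_r)((u_i)_r)² ≥ 0 is the discrete entropy dissipation. -/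
/-!
Differentiating the entropy gives `dẼ/dt = Σᵢ (hᵢ/2) Σᵣ wᵣ ξᵢᵣ ρ'ᵢᵣ`, the symmetry of the kernel
making the two halves of the product rule on the interaction term equal. In each cell the scheme
says `(hᵢ/2) M ρ'ᵢ = -DᵀM (f(ρᵢ) ⊙ uᵢ) + B 𝔽*ᵢ`, and the definition of the discrete velocity says
`(hᵢ/2) M uᵢ = -DᵀM ξᵢ + B ξ*ᵢ`. Pairing the first with `ξᵢ`, summation by parts `MD + DᵀM = B`
moves `DᵀM` onto `ξᵢ`, and the second identity then turns the cell contribution into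
`-(hᵢ/2) Σᵣ wᵣ f uᵣ²` plus endpoint terms.
Summed over the periodic mesh, the endpoint terms regroup by interface; there the central parts of
`ξ̂` and `𝔽̂` cancel exactly, leaving `-(α/2) [g(ρ)] [ξ]`, and `[ξ] = [H′(ρ)]` because `V` and `K`
are single-valued at interfaces. Monotonicity of `g` and `H′` makes these terms nonnegative.
-/

open Matrix

noncomputable section Entropy

variable {ι ν : Type*} [Fintype ι] [Fintype ν]
  (c : ι → ℝ) (w : ν → ℝ) (H : ℝ → ℝ) (V : ι → ν → ℝ) (K : ι → ι → ν → ν → ℝ)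

def interactionForm (a b : ι → ν → ℝ) : ℝ :=
  ∑ i, ∑ j, c i * c j * ∑ r, ∑ s, w r * w s * K i j r s * a i r * b j s

def discreteEntropy (ρ : ι → ν → ℝ) : ℝ :=
  (∑ i, c i * ∑ r, w r * (H (ρ i r) + V i r * ρ i r)) + 1 / 2 * interactionForm c w K ρ ρ

def entropyVariable (ρ : ι → ν → ℝ) (i : ι) (r : ν) : ℝ :=
  deriv H (ρ i r) + V i r + ∑ j, c j * ∑ s, w s * K i j r s * ρ j s

variable {c w K}

lemma interactionForm_comm (hK : ∀ i j r s, K i j r s = K j i s r) (a b : ι → ν → ℝ) :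
    interactionForm c w K a b = interactionForm c w K b a := by
  unfold interactionForm
  rw [Finset.sum_comm]
  refine Finset.sum_congr rfl fun i _ => Finset.sum_congr rfl fun j _ => ?_
  rw [Finset.sum_comm, mul_comm (c j)]
  congr 1
  refine Finset.sum_congr rfl fun r _ => Finset.sum_congr rfl fun s _ => ?_
  rw [hK]
  ring

lemma interactionForm_eq_sum (a b : ι → ν → ℝ) :
    interactionForm c w K a b
      = ∑ i, c i * ∑ r, w r * ((∑ j, c j * ∑ s, w s * K i j r s * b j s) * a i r) := by
  simp only [interactionForm, Finset.mul_sum, Finset.sum_mul]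
  refine Finset.sum_congr rfl fun i _ => ?_
  rw [Finset.sum_comm]
  refine Finset.sum_congr rfl fun r _ => Finset.sum_congr rfl fun j _ =>
    Finset.sum_congr rfl fun s _ => ?_
  ring

lemma hasDerivAt_interactionForm {a b : ℝ → ι → ν → ℝ} {a' b' : ι → ν → ℝ} {t : ℝ}
    (ha : ∀ i r, HasDerivAt (fun τ => a τ i r) (a' i r) t)
    (hb : ∀ i r, HasDerivAt (fun τ => b τ i r) (b' i r) t) :
    HasDerivAt (fun τ => interactionForm c w K (a τ) (b τ))
      (interactionForm c w K a' (b t) + interactionForm c w K (a t) b') t := by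
  have := HasDerivAt.fun_sum (u := Finset.univ) fun i _ =>
    HasDerivAt.fun_sum (u := Finset.univ) fun j _ =>
      (HasDerivAt.fun_sum (u := Finset.univ) fun r _ =>
        HasDerivAt.fun_sum (u := Finset.univ) fun s _ =>
          ((ha i r).const_mul (w r * w s * K i j r s)).mul (hb j s)).const_mul (c i * c j)
  refine this.congr_deriv ?_
  simp only [interactionForm, ← Finset.sum_add_distrib, ← mul_add]

variable (c w K)

lemma hasDerivAt_discreteEntropy (hH : Differentiable ℝ H) (hK : ∀ i j r s, K i j r s = K j i s r)
    {ρ : ℝ → ι → ν → ℝ} {ρ' : ι → ν → ℝ} {t : ℝ}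
    (hρ : ∀ i r, HasDerivAt (fun τ => ρ τ i r) (ρ' i r) t) :
    HasDerivAt (fun τ => discreteEntropy c w H V K (ρ τ))
      (∑ i, c i * ∑ r, w r * (entropyVariable c w H V K (ρ t) i r * ρ' i r)) t := by
  have hlocal := HasDerivAt.fun_sum (u := Finset.univ) fun i _ =>
    (HasDerivAt.fun_sum (u := Finset.univ) fun r _ =>
      (((hH _).hasDerivAt.comp t (hρ i r)).add ((hρ i r).const_mul (V i r))).const_mul
        (w r)).const_mul (c i)
  have hinter := (hasDerivAt_interactionForm (c := c) (w := w) (K := K) hρ hρ).const_mul (1 / 2)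
  refine (hlocal.add hinter).congr_deriv ?_
  rw [interactionForm_comm hK (ρ t), ← two_mul, ← mul_assoc, one_div_mul_cancel two_ne_zero,
    one_mul, interactionForm_eq_sum, ← Finset.sum_add_distrib]
  refine Finset.sum_congr rfl fun i _ => ?_
  rw [← mul_add, ← Finset.sum_add_distrib]
  congr 1
  refine Finset.sum_congr rfl fun r _ => ?_
  simp only [entropyVariable]
  ring

end Entropy

lemma entropyVariable_jump {ι : Type*} [Fintype ι] [Add ι] [One ι] {k : ℕ}
    (c : ι → ℝ) (w : Fin (k + 1) → ℝ) (H : ℝ → ℝ) {V : ι → Fin (k + 1) → ℝ}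
    {K : ι → ι → Fin (k + 1) → Fin (k + 1) → ℝ} (hV : ∀ i, V i (Fin.last k) = V (i + 1) 0)
    (hK : ∀ i j s, K i j (Fin.last k) s = K (i + 1) j 0 s) (ρ : ι → Fin (k + 1) → ℝ) (i : ι) :
    entropyVariable c w H V K ρ (i + 1) 0 - entropyVariable c w H V K ρ i (Fin.last k)
      = deriv H (ρ (i + 1) 0) - deriv H (ρ i (Fin.last k)) := by
  simp only [entropyVariable, hV, hK]
  ring

namespace Matrix

variable {n : Type*} [Fintype n] {𝕜 : Type*} [Field 𝕜]

lemma inv_smul_mulVec_eq_of_eq_smul_inv_mulVec [DecidableEq n] {M : Matrix n n 𝕜}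
    (hM : IsUnit M.det) {c : 𝕜} (hc : c ≠ 0) {x y : n → 𝕜} (hx : x = c • (M⁻¹ *ᵥ y)) :
    c⁻¹ • (M *ᵥ x) = y := by
  rw [hx, mulVec_smul, mulVec_mulVec, mul_nonsing_inv M hM, one_mulVec, inv_smul_smul₀ hc]

lemma dotProduct_smul_diagonal_mulVec [DecidableEq n] (x : n → 𝕜) (c : 𝕜) (w z : n → 𝕜) :
    x ⬝ᵥ (c • (diagonal w *ᵥ z)) = c * ∑ r, w r * (x r * z r) := by
  simp only [dotProduct, mulVec_diagonal, Pi.smul_apply, smul_eq_mul, Finset.mul_sum]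
  exact Finset.sum_congr rfl fun r _ => by ring

lemma dotProduct_mulVec_add_mulVec_dotProduct {A B : Matrix n n 𝕜} (hAB : A + Aᵀ = B)
    (x y : n → 𝕜) : x ⬝ᵥ (A *ᵥ y) + (A *ᵥ x) ⬝ᵥ y = x ⬝ᵥ (B *ᵥ y) := by
  rw [dotProduct_comm (A *ᵥ x), dotProduct_mulVec y, ← mulVec_transpose, dotProduct_comm,
    ← add_dotProduct, ← add_mulVec, hAB, dotProduct_comm]

lemma dotProduct_smul_mulVec_eq_of_add_transpose_eq {A B M : Matrix n n 𝕜} (hAB : A + Aᵀ = B)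
    {c : 𝕜} {ξ ξs u y Fs ρ' : n → 𝕜}
    (hu : c • (M *ᵥ u) = -(A *ᵥ ξ) + B *ᵥ ξs) (hρ' : c • (M *ᵥ ρ') = -(A *ᵥ y) + B *ᵥ Fs) :
    ξ ⬝ᵥ (c • (M *ᵥ ρ'))
      = y ⬝ᵥ (B *ᵥ ξs) - ξ ⬝ᵥ (B *ᵥ y) + ξ ⬝ᵥ (B *ᵥ Fs) - y ⬝ᵥ (c • (M *ᵥ u)) := by
  have hAξ : A *ᵥ ξ = B *ᵥ ξs - c • (M *ᵥ u) := by rw [hu]; abel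
  have hsbp := dotProduct_mulVec_add_mulVec_dotProduct hAB ξ y
  rw [hAξ, sub_dotProduct, dotProduct_comm (B *ᵥ ξs), dotProduct_comm (c • _)] at hsbp
  rw [hρ', dotProduct_add, dotProduct_neg]
  linear_combination -hsbp

end Matrix

/-- `boundaryLift k a b = (a, 0, …, 0, b)`: the paper's `ξ*ᵢ` and `𝔽*ᵢ` are
`boundaryLift k ξ̂ᵢ₋½ ξ̂ᵢ₊½` and `boundaryLift k 𝔽̂ᵢ₋½ 𝔽̂ᵢ₊½`, and its `B` is `boundaryMatrix k`. -/
def boundaryLift (k : ℕ) (a b : ℝ) : Fin (k + 1) → ℝ :=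
  fun r => if r = 0 then a else if r = Fin.last k then b else 0

def boundaryMatrix (k : ℕ) : Matrix (Fin (k + 1)) (Fin (k + 1)) ℝ :=
  diagonal (boundaryLift k (-1) 1)

section Boundary

variable {k : ℕ}

@[simp]
lemma boundaryLift_zero (a b : ℝ) : boundaryLift k a b 0 = a := if_pos rfl

lemma boundaryLift_last (hk : k ≠ 0) (a b : ℝ) : boundaryLift k a b (Fin.last k) = b := by
  have hne : Fin.last k ≠ 0 := by simpa [Fin.ext_iff] using hk
  simp [boundaryLift, hne]

lemma dotProduct_boundaryMatrix_mulVec (hk : k ≠ 0) (x y : Fin (k + 1) → ℝ) :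
    x ⬝ᵥ (boundaryMatrix k *ᵥ y) = x (Fin.last k) * y (Fin.last k) - x 0 * y 0 := by
  have hne : Fin.last k ≠ 0 := by simpa [Fin.ext_iff] using hk
  simp only [boundaryMatrix, boundaryLift, dotProduct, mulVec_diagonal, ite_mul, neg_mul, one_mul,
    zero_mul, mul_ite, mul_neg, mul_zero, Finset.sum_ite, Finset.filter_eq', Finset.mem_univ,
    ↓reduceIte, Finset.sum_neg_distrib, Finset.sum_singleton, Finset.filter_ne',
    Finset.sum_const_zero, Finset.mem_erase, ne_eq, hne, not_false_eq_true, and_self]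
  ring

lemma cell_entropy_balance (hk : k ≠ 0) {A M : Matrix (Fin (k + 1)) (Fin (k + 1)) ℝ}
    (hA : A + Aᵀ = boundaryMatrix k) {c : ℝ} {ξ u y ρ' : Fin (k + 1) → ℝ} {ξl ξr Fl Fr : ℝ}
    (hu : c • (M *ᵥ u) = -(A *ᵥ ξ) + boundaryMatrix k *ᵥ boundaryLift k ξl ξr)
    (hρ' : c • (M *ᵥ ρ') = -(A *ᵥ y) + boundaryMatrix k *ᵥ boundaryLift k Fl Fr) :
    ξ ⬝ᵥ (c • (M *ᵥ ρ'))
      = (y (Fin.last k) * ξr - ξ (Fin.last k) * y (Fin.last k) + ξ (Fin.last k) * Fr)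
        - (y 0 * ξl - ξ 0 * y 0 + ξ 0 * Fl) - y ⬝ᵥ (c • (M *ᵥ u)) := by
  rw [dotProduct_smul_mulVec_eq_of_add_transpose_eq hA hu hρ',
    dotProduct_boundaryMatrix_mulVec hk, dotProduct_boundaryMatrix_mulVec hk,
    dotProduct_boundaryMatrix_mulVec hk, boundaryLift_zero, boundaryLift_zero,
    boundaryLift_last hk, boundaryLift_last hk]
  ring

end Boundary

section PeriodicMesh

variable {k : ℕ} {ι : Type*} [Fintype ι] [AddGroupWithOne ι]

/-- Interface quantities are indexed by their left cell: `ξhat i`, `Fhat i` and `d i` sit at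
`i + ½`. -/
lemma entropy_production_eq (hk : k ≠ 0) {h : ι → ℝ} (hh : ∀ i, h i ≠ 0)
    {w : Fin (k + 1) → ℝ} (hw : ∀ r, w r ≠ 0) {M B D : Matrix (Fin (k + 1)) (Fin (k + 1)) ℝ}
    (hM : M = diagonal w) (hB : B = boundaryMatrix k) (hSBP : M * D + Dᵀ * M = B)
    {ξ y u ρ' ξstar Fstar : ι → Fin (k + 1) → ℝ} {ξhat Fhat d : ι → ℝ}
    (hξhat : ∀ i, ξhat i = (ξ i (Fin.last k) + ξ (i + 1) 0) / 2)
    (hξstar : ∀ i, ξstar i = boundaryLift k (ξhat (i - 1)) (ξhat i))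
    (hu : ∀ i, u i = (2 / h i) • (M⁻¹ *ᵥ (-((Dᵀ * M) *ᵥ ξ i) + B *ᵥ ξstar i)))
    (hFhat : ∀ i, Fhat i = (y (i + 1) 0 + y i (Fin.last k)) / 2 + d i)
    (hFstar : ∀ i, Fstar i = boundaryLift k (Fhat (i - 1)) (Fhat i))
    (hρ' : ∀ i, ρ' i = (2 / h i) • (M⁻¹ *ᵥ (-((Dᵀ * M) *ᵥ y i) + B *ᵥ Fstar i))) :
    ∑ i, h i / 2 * ∑ r, w r * (ξ i r * ρ' i r)
      = -(∑ i, h i / 2 * ∑ r, w r * (y i r * u i r))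
        - ∑ i, d i * (ξ (i + 1) 0 - ξ i (Fin.last k)) := by
  subst hM hB
  have hA : Dᵀ * diagonal w + (Dᵀ * diagonal w)ᵀ = boundaryMatrix k := by
    rw [transpose_mul, diagonal_transpose, transpose_transpose]
    exact (add_comm _ _).trans hSBP
  have hsolve : ∀ i {x z}, x = (2 / h i) • ((diagonal w)⁻¹ *ᵥ z) →
      (h i / 2) • (diagonal w *ᵥ x) = z := fun i _ _ hx => by
    simpa only [inv_div] using
      inv_smul_mulVec_eq_of_eq_smul_inv_mulVec ((isUnit_iff_isUnit_det _).mp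
        (isUnit_diagonal.mpr (Pi.isUnit_iff.mpr fun r => (hw r).isUnit))) (by simp [hh i]) hx
  have hcell : ∀ i, h i / 2 * ∑ r, w r * (ξ i r * ρ' i r)
      = (y i (Fin.last k) * ξhat i - ξ i (Fin.last k) * y i (Fin.last k)
          + ξ i (Fin.last k) * Fhat i)
        - (y i 0 * ξhat (i - 1) - ξ i 0 * y i 0 + ξ i 0 * Fhat (i - 1))
        - h i / 2 * ∑ r, w r * (y i r * u i r) := fun i => by
    have := cell_entropy_balance hk hA (hsolve i (hξstar i ▸ hu i)) (hsolve i (hFstar i ▸ hρ' i))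
    rwa [dotProduct_smul_diagonal_mulVec, dotProduct_smul_diagonal_mulVec] at this
  have hshift : ∑ i, (y i 0 * ξhat (i - 1) - ξ i 0 * y i 0 + ξ i 0 * Fhat (i - 1))
      = ∑ i, (y (i + 1) 0 * ξhat i - ξ (i + 1) 0 * y (i + 1) 0 + ξ (i + 1) 0 * Fhat i) := by
    rw [← Equiv.sum_comp (Equiv.addRight 1)]
    simp only [Equiv.coe_addRight, add_sub_cancel_right]
  have hinterface : ∀ i, (y i (Fin.last k) * ξhat i - ξ i (Fin.last k) * y i (Fin.last k)
        + ξ i (Fin.last k) * Fhat i)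
      - (y (i + 1) 0 * ξhat i - ξ (i + 1) 0 * y (i + 1) 0 + ξ (i + 1) 0 * Fhat i)
      = -(d i * (ξ (i + 1) 0 - ξ i (Fin.last k))) := fun i => by
    rw [hξhat, hFhat]
    ring
  rw [Finset.sum_congr rfl fun i _ => hcell i, Finset.sum_sub_distrib, Finset.sum_sub_distrib,
    hshift, ← Finset.sum_sub_distrib, Finset.sum_congr rfl fun i _ => hinterface i,
    Finset.sum_neg_distrib]
  ring

end PeriodicMesh

theorem discrete_entropy_inequality_1d_general
    (k N : ℕ) (hk : 1 ≤ k) [NeZero N]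
    (hcell : ZMod N → ℝ) (hh : ∀ i, 0 < hcell i)
    (w : Fin (k+1) → ℝ) (hw : ∀ r, 0 < w r)
    (M B D : Matrix (Fin (k+1)) (Fin (k+1)) ℝ)
    (hM : M = Matrix.diagonal w)
    (hB : B = Matrix.diagonal
      (fun r => if r = 0 then (-1 : ℝ) else if r = Fin.last k then 1 else 0))
    (hSBP : M * D + Dᵀ * M = B)
    (H f g : ℝ → ℝ)
    (hH : Differentiable ℝ H) (hH' : StrictMono (deriv H))
    (hf : ∀ s, 0 ≤ f s) (hg : Monotone g)
    (V : ZMod N → Fin (k+1) → ℝ)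
    (hV : ∀ i, V i (Fin.last k) = V (i+1) 0)
    (K : ZMod N → ZMod N → Fin (k+1) → Fin (k+1) → ℝ)
    (hKsym : ∀ i j r s, K i j r s = K j i s r)
    (hKsv : ∀ i j s, K i j (Fin.last k) s = K (i+1) j 0 s)
    (ρ ρ' : ℝ → ZMod N → Fin (k+1) → ℝ)
    (hρ : ∀ t i r, HasDerivAt (fun τ => ρ τ i r) (ρ' t i r) t)
    (ξ : ℝ → ZMod N → Fin (k+1) → ℝ)
    (hξ : ∀ t i r, ξ t i r = deriv H (ρ t i r) + V i r +
      ∑ j, (hcell j / 2) * ∑ s, w s * K i j r s * ρ t j s)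
    (ξhat : ℝ → ZMod N → ℝ)
    (hξhat : ∀ t i, ξhat t i = (ξ t i (Fin.last k) + ξ t (i+1) 0) / 2)
    (ξstar : ℝ → ZMod N → Fin (k+1) → ℝ)
    (hξstar : ∀ t i, ξstar t i = fun r =>
      if r = 0 then ξhat t (i-1) else if r = Fin.last k then ξhat t i else 0)
    (u : ℝ → ZMod N → Fin (k+1) → ℝ)
    (hu : ∀ t i, u t i
      = (2 / hcell i) • (M⁻¹ *ᵥ (-((Dᵀ * M) *ᵥ ξ t i) + B *ᵥ ξstar t i)))
    (α : ZMod N → ℝ) (hα : ∀ i, 0 ≤ α i)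
    (Fhat : ℝ → ZMod N → ℝ)
    (hFhat : ∀ t i, Fhat t i =
      (f (ρ t (i+1) 0) * u t (i+1) 0 + f (ρ t i (Fin.last k)) * u t i (Fin.last k)) / 2
      + (α i / 2) * (g (ρ t (i+1) 0) - g (ρ t i (Fin.last k))))
    (Fstar : ℝ → ZMod N → Fin (k+1) → ℝ)
    (hFstar : ∀ t i, Fstar t i = fun r =>
      if r = 0 then Fhat t (i-1) else if r = Fin.last k then Fhat t i else 0)
    (hscheme : ∀ t i, (fun r => ρ' t i r)
      = (2 / hcell i) • (M⁻¹ *ᵥ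
          (-((Dᵀ * M) *ᵥ (fun r => f (ρ t i r) * u t i r)) + B *ᵥ Fstar t i)))
    (E : ℝ → ℝ)
    (hE : ∀ t, E t
      = (∑ i, (hcell i / 2) * ∑ r, w r * (H (ρ t i r) + V i r * ρ t i r))
      + (1/2) * ∑ i, ∑ j, (hcell i / 2) * (hcell j / 2) *
          ∑ r, ∑ s, w r * w s * K i j r s * ρ t i r * ρ t j s)
    (t : ℝ) :
    HasDerivAt E
      (-(∑ i, (hcell i / 2) * ∑ r, w r * f (ρ t i r) * (u t i r)^2)
       - ∑ i, (α i / 2) * (g (ρ t (i+1) 0) - g (ρ t i (Fin.last k)))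
            * (deriv H (ρ t (i+1) 0) - deriv H (ρ t i (Fin.last k)))) t
    ∧ (-(∑ i, (hcell i / 2) * ∑ r, w r * f (ρ t i r) * (u t i r)^2)
       - ∑ i, (α i / 2) * (g (ρ t (i+1) 0) - g (ρ t i (Fin.last k)))
            * (deriv H (ρ t (i+1) 0) - deriv H (ρ t i (Fin.last k))))
      ≤ -(∑ i, (hcell i / 2) * ∑ r, w r * f (ρ t i r) * (u t i r)^2)
    ∧ 0 ≤ ∑ i, (hcell i / 2) * ∑ r, w r * f (ρ t i r) * (u t i r)^2 := by
  have hk0 : k ≠ 0 := Nat.one_le_iff_ne_zero.mp hk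
  have hξt : ξ t = entropyVariable (fun i => hcell i / 2) w H V K (ρ t) :=
    funext fun i => funext (hξ t i)
  have hvariation := hasDerivAt_discreteEntropy (fun i => hcell i / 2) w H V K hH hKsym (hρ t)
  have hproduction := entropy_production_eq (y := fun i r => f (ρ t i r) * u t i r)
    (d := fun i => α i / 2 * (g (ρ t (i + 1) 0) - g (ρ t i (Fin.last k)))) hk0
    (fun i => (hh i).ne') (fun r => (hw r).ne') hM hB hSBP (hξhat t) (hξstar t) (hu t)
    (hFhat t) (hFstar t) (hscheme t)
  have hdissipation : 0 ≤ ∑ i, (hcell i / 2) * ∑ r, w r * f (ρ t i r) * (u t i r)^2 :=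
    Finset.sum_nonneg fun i _ => mul_nonneg (half_pos (hh i)).le <| Finset.sum_nonneg fun r _ =>
      mul_nonneg (mul_nonneg (hw r).le (hf _)) (sq_nonneg _)
  have hupwinding : 0 ≤ ∑ i, (α i / 2) * (g (ρ t (i+1) 0) - g (ρ t i (Fin.last k)))
      * (deriv H (ρ t (i+1) 0) - deriv H (ρ t i (Fin.last k))) :=
    Finset.sum_nonneg fun i _ => mul_assoc (α i / 2) _ _ ▸
      mul_nonneg (div_nonneg (hα i) zero_le_two) ((hg.monovary hH'.monotone).sub_mul_sub_nonneg _ _)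
  refine ⟨?_, by linarith, hdissipation⟩
  rw [show E = _ from funext hE]
  refine hvariation.congr_deriv ?_
  rw [← hξt, hproduction]
  simp only [hξt, entropyVariable_jump _ w H hV hKsv]
  congr 2
  exact Finset.sum_congr rfl fun i _ => congrArg _ (Finset.sum_congr rfl fun r _ => by ring)

/-- Discrete entropy inequality for the 1D semi-discrete DG scheme
(Theorem 2.1, first part): along any differentiable solution of the
semi-discrete scheme, the discrete entropy `Ẽ` satisfies the exact identity
`dẼ/dt = −Ĩ − Σᵢ (αᵢ₊½/2)[g][H′]`, hence `dẼ/dt ≤ −Ĩ` with `Ĩ ≥ 0`. -/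
theorem discrete_entropy_inequality_1d
    (k N : ℕ) (hk : 1 ≤ k) [NeZero N] (hN : 2 ≤ N)
    (hcell : ZMod N → ℝ) (hh : ∀ i, 0 < hcell i)
    (w : Fin (k+1) → ℝ) (hw : ∀ r, 0 < w r)
    (M B D : Matrix (Fin (k+1)) (Fin (k+1)) ℝ)
    (hM : M = Matrix.diagonal w)
    (hB : B = Matrix.diagonal
      (fun r => if r = 0 then (-1 : ℝ) else if r = Fin.last k then 1 else 0))
    (hSBP : M * D + Dᵀ * M = B)
    (H f g : ℝ → ℝ)
    (hH : Differentiable ℝ H) (hH' : StrictMono (deriv H))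
    (hf : ∀ s, 0 ≤ f s) (hg : Monotone g)
    (V : ZMod N → Fin (k+1) → ℝ)
    (hV : ∀ i, V i (Fin.last k) = V (i+1) 0)
    (K : ZMod N → ZMod N → Fin (k+1) → Fin (k+1) → ℝ)
    (hKsym : ∀ i j r s, K i j r s = K j i s r)
    (hKsv : ∀ i j s, K i j (Fin.last k) s = K (i+1) j 0 s)
    (ρ ρ' : ℝ → ZMod N → Fin (k+1) → ℝ)
    (hρ : ∀ t i r, HasDerivAt (fun τ => ρ τ i r) (ρ' t i r) t)
    (ξ : ℝ → ZMod N → Fin (k+1) → ℝ)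
    (hξ : ∀ t i r, ξ t i r = deriv H (ρ t i r) + V i r +
      ∑ j, (hcell j / 2) * ∑ s, w s * K i j r s * ρ t j s)
    (ξhat : ℝ → ZMod N → ℝ)
    (hξhat : ∀ t i, ξhat t i = (ξ t i (Fin.last k) + ξ t (i+1) 0) / 2)
    (ξstar : ℝ → ZMod N → Fin (k+1) → ℝ)
    (hξstar : ∀ t i, ξstar t i = fun r =>
      if r = 0 then ξhat t (i-1) else if r = Fin.last k then ξhat t i else 0)
    (u : ℝ → ZMod N → Fin (k+1) → ℝ)
    (hu : ∀ t i, u t i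
      = (2 / hcell i) • (M⁻¹ *ᵥ (-((Dᵀ * M) *ᵥ ξ t i) + B *ᵥ ξstar t i)))
    (α : ZMod N → ℝ) (hα : ∀ i, 0 ≤ α i)
    (Fhat : ℝ → ZMod N → ℝ)
    (hFhat : ∀ t i, Fhat t i =
      (f (ρ t (i+1) 0) * u t (i+1) 0 + f (ρ t i (Fin.last k)) * u t i (Fin.last k)) / 2
      + (α i / 2) * (g (ρ t (i+1) 0) - g (ρ t i (Fin.last k))))
    (Fstar : ℝ → ZMod N → Fin (k+1) → ℝ)
    (hFstar : ∀ t i, Fstar t i = fun r =>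
      if r = 0 then Fhat t (i-1) else if r = Fin.last k then Fhat t i else 0)
    (hscheme : ∀ t i, (fun r => ρ' t i r)
      = (2 / hcell i) • (M⁻¹ *ᵥ
          (-((Dᵀ * M) *ᵥ (fun r => f (ρ t i r) * u t i r)) + B *ᵥ Fstar t i)))
    (E : ℝ → ℝ)
    (hE : ∀ t, E t
      = (∑ i, (hcell i / 2) * ∑ r, w r * (H (ρ t i r) + V i r * ρ t i r))
      + (1/2) * ∑ i, ∑ j, (hcell i / 2) * (hcell j / 2) *
          ∑ r, ∑ s, w r * w s * K i j r s * ρ t i r * ρ t j s)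
    (t : ℝ) :
    HasDerivAt E
      (-(∑ i, (hcell i / 2) * ∑ r, w r * f (ρ t i r) * (u t i r)^2)
       - ∑ i, (α i / 2) * (g (ρ t (i+1) 0) - g (ρ t i (Fin.last k)))
            * (deriv H (ρ t (i+1) 0) - deriv H (ρ t i (Fin.last k)))) t
    ∧ (-(∑ i, (hcell i / 2) * ∑ r, w r * f (ρ t i r) * (u t i r)^2)
       - ∑ i, (α i / 2) * (g (ρ t (i+1) 0) - g (ρ t i (Fin.last k)))
            * (deriv H (ρ t (i+1) 0) - deriv H (ρ t i (Fin.last k))))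
      ≤ -(∑ i, (hcell i / 2) * ∑ r, w r * f (ρ t i r) * (u t i r)^2)
    ∧ 0 ≤ ∑ i, (hcell i / 2) * ∑ r, w r * f (ρ t i r) * (u t i r)^2 :=
  discrete_entropy_inequality_1d_general k N hk hcell hh w hw M B D hM hB hSBP H f g hH hH' hf hg V
    hV K hKsym hKsv ρ ρ' hρ ξ hξ ξhat hξhat ξstar hξstar u hu α hα Fhat hFhat Fstar hFstar hscheme E
    hE t
end

section
/- Weak positivity of the Euler-forward step (Lemma 2.1). Assume all nodal values are nonnegative: ρ_i^r ≥ 0 for all i and all r ∈ {1,…,k+1}. Assume that for every i the time-step constraints hold: λ_i · ( f(ρ_i^1) u⁺_{i−½} + α_{i−½} g(ρ_i^1) ) ≤ w_1 ρ_i^1 and λ_i · ( α_{i+½} g(ρ_i^{k+1}) − f(ρ_i^{k+1}) u⁻_{i+½} ) ≤ w_{k+1} ρ_i^{k+1} (these are the conditions λ_i ≤ min{ (w_1 ρ/(fu+αg))⁺_{i−½}, (w_{k+1} ρ/(αg−fu))⁻_{i+½} } written without division, with the convention 0/0 = +∞). Then the updated cell averages satisfy ρ̄_i^{new} ≥ 0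 for all i. -/
open BigOperators

/-- Weak positivity of the Euler-forward step (Lemma 2.1): if all nodal values
are nonnegative and the time-step constraints hold, then the updated cell
averages are nonnegative. -/
theorem weak_positivity_euler_forward_1d
    (k N : ℕ) (hk : 1 ≤ k) [NeZero N] (hN : 2 ≤ N)
    (w : Fin (k+1) → ℝ) (hw : ∀ r, 0 < w r) (hwsum : ∑ r, w r = 2)
    (ρ : ZMod N → Fin (k+1) → ℝ)
    (f g : ℝ → ℝ) (hfg : ∀ s, 0 ≤ s → 0 ≤ f s ∧ f s ≤ g s)
    (uminus uplus : ZMod N → ℝ)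
    (α : ZMod N → ℝ)
    (hα : ∀ i, max |uplus i| |uminus i| ≤ α i)
    (F : ZMod N → ℝ)
    (hF : ∀ i, F i
      = (f (ρ (i+1) 0) * uplus i + f (ρ i (Fin.last k)) * uminus i) / 2
        + (α i / 2) * (g (ρ (i+1) 0) - g (ρ i (Fin.last k))))
    (lam : ZMod N → ℝ) (hlam : ∀ i, 0 < lam i)
    (avg avgnew : ZMod N → ℝ)
    (havg : ∀ i, avg i = (1/2) * ∑ r, w r * ρ i r)
    (havgnew : ∀ i, avgnew i = avg i + lam i * (F i - F (i-1)))
    (hρnonneg : ∀ i r, 0 ≤ ρ i r)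
    (hc1 : ∀ i, lam i * (f (ρ i 0) * uplus (i-1) + α (i-1) * g (ρ i 0))
      ≤ w 0 * ρ i 0)
    (hc2 : ∀ i, lam i * (α i * g (ρ i (Fin.last k))
        - f (ρ i (Fin.last k)) * uminus i)
      ≤ w (Fin.last k) * ρ i (Fin.last k)) :
    ∀ i, 0 ≤ avgnew i := by
  intro i
  have hlast0 : (Fin.last k) ≠ (0 : Fin (k+1)) := by
    simp [Fin.ext_iff]; omega
  -- split the sum
  have hmem0 : (0 : Fin (k+1)) ∈ Finset.univ := Finset.mem_univ _
  have hmeml : (Fin.last k) ∈ (Finset.univ.erase (0 : Fin (k+1))) :=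
    Finset.mem_erase.mpr ⟨hlast0, Finset.mem_univ _⟩
  set S := ∑ r ∈ (Finset.univ.erase (0 : Fin (k+1))).erase (Fin.last k),
      w r * ρ i r with hSdef
  have hsplit : ∑ r, w r * ρ i r
      = w 0 * ρ i 0 + (w (Fin.last k) * ρ i (Fin.last k) + S) := by
    rw [← Finset.add_sum_erase _ _ hmem0, ← Finset.add_sum_erase _ _ hmeml]
  have hS : 0 ≤ S :=
    Finset.sum_nonneg fun r _ => mul_nonneg (hw r).le (hρnonneg i r)
  -- nonnegativity of α's
  have hαnn : ∀ j, 0 ≤ α j := fun j =>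
    le_trans (le_trans (abs_nonneg _) (le_max_left _ _)) (hα j)
  -- C ≥ 0
  have hup : |uplus i| ≤ α i := le_trans (le_max_left _ _) (hα i)
  have hum : |uminus (i-1)| ≤ α (i-1) := le_trans (le_max_right _ _) (hα (i-1))
  obtain ⟨hf1, hf2⟩ := hfg (ρ (i+1) 0) (hρnonneg (i+1) 0)
  obtain ⟨hf3, hf4⟩ := hfg (ρ (i-1) (Fin.last k)) (hρnonneg (i-1) (Fin.last k))
  obtain ⟨hu1, hu2⟩ := abs_le.mp hup
  obtain ⟨hv1, hv2⟩ := abs_le.mp hum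
  have hC : 0 ≤ f (ρ (i+1) 0) * uplus i + α i * g (ρ (i+1) 0) := by
    nlinarith [mul_nonneg hf1 (hαnn i)]
  have hD : 0 ≤ α (i-1) * g (ρ (i-1) (Fin.last k))
      - f (ρ (i-1) (Fin.last k)) * uminus (i-1) := by
    nlinarith [mul_nonneg hf3 (hαnn (i-1))]
  have hlC : 0 ≤ lam i * (f (ρ (i+1) 0) * uplus i + α i * g (ρ (i+1) 0)) :=
    mul_nonneg (hlam i).le hC
  have hlD : 0 ≤ lam i * (α (i-1) * g (ρ (i-1) (Fin.last k))
      - f (ρ (i-1) (Fin.last k)) * uminus (i-1)) :=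
    mul_nonneg (hlam i).le hD
  have h1 := hc1 i
  have h2 := hc2 i
  have key : 2 * avgnew i
      = S
        + (w 0 * ρ i 0
            - lam i * (f (ρ i 0) * uplus (i-1) + α (i-1) * g (ρ i 0)))
        + (w (Fin.last k) * ρ i (Fin.last k)
            - lam i * (α i * g (ρ i (Fin.last k))
                - f (ρ i (Fin.last k)) * uminus i))
        + lam i * (f (ρ (i+1) 0) * uplus i + α i * g (ρ (i+1) 0))
        + lam i * (α (i-1) * g (ρ (i-1) (Fin.last k))
            - f (ρ (i-1) (Fin.last k)) * uminus (i-1)) := by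
    rw [havgnew i, havg i, hsplit, hF i, hF (i-1)]
    have : (i - 1 + 1 : ZMod N) = i := by ring
    rw [this]; ring
  linarith
end

section
/- The Euler-forward step combined with the positivity-preserving limiter preserves nonnegativity of all nodal values (Theorem 2.2). Assume ρ_i^r ≥ 0 for all i, r, and assume for every i the time-step constraints λ_i · ( f(ρ_i^1) u⁺_{i−½} + α_{i−½} g(ρ_i^1) ) ≤ w_1 ρ_i^1 and λ_i · ( α_{i+½} g(ρ_i^{k+1}) − f(ρ_i^{k+1}) u⁻_{i+½} ) ≤ w_{k+1} ρ_i^{k+1}. Let (p_i^r)_{r=1}^{k+1} be any pre-limited nodal values in cell i whose weighted average equals the updated cell average: ½ Σ_r w_r p_i^r = ρ̄_i^{new}. Define m_i = min_r p_i^r, θ_i = min{ ρ̄_i^{new}/(ρ̄_i^{new} − m_i), 1 } if m_i < ρ̄_i^{new} and θ_i = 1 otherwise, and the limited nodal values q_i^r = ρ̄_i^{new} + θ_i (p_i^r − ρ̄_i^{new}). Then for every i and r one has q_i^r ≥ 0, and the limited values have the same cell average: ½ Σ_r w_r q_i^r = ρ̄_i^{new}. -/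
open BigOperators

lemma lf_flux_aux (f g : ℝ → ℝ) (s u a : ℝ) (hs : 0 ≤ s)
    (hfg : 0 ≤ f s ∧ f s ≤ g s) (ha : |u| ≤ a) :
    0 ≤ f s * u + a * g s ∧ 0 ≤ a * g s - f s * u := by
  obtain ⟨h1, h2⟩ := hfg
  have h3 : 0 ≤ |u| := abs_nonneg u
  have h4 : -|u| ≤ u := neg_abs_le u
  have h5 : u ≤ |u| := le_abs_self u
  have hga : g s * |u| ≤ g s * a :=
    mul_le_mul_of_nonneg_left ha (h1.trans h2)
  have hfgu : f s * |u| ≤ g s * |u| := mul_le_mul_of_nonneg_right h2 h3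
  constructor
  · nlinarith [mul_le_mul_of_nonneg_left h4 h1]
  · nlinarith [mul_le_mul_of_nonneg_left h5 h1]

/-- The Euler-forward step combined with the positivity-preserving limiter
preserves nonnegativity of all nodal values (Theorem 2.2). -/
theorem euler_forward_with_limiter_positivity_1d
    (k N : ℕ) (hk : 1 ≤ k) [NeZero N] (hN : 2 ≤ N)
    (w : Fin (k+1) → ℝ) (hw : ∀ r, 0 < w r) (hwsum : ∑ r, w r = 2)
    (ρ : ZMod N → Fin (k+1) → ℝ)
    (f g : ℝ → ℝ) (hfg : ∀ s, 0 ≤ s → 0 ≤ f s ∧ f s ≤ g s)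
    (uminus uplus : ZMod N → ℝ)
    (α : ZMod N → ℝ)
    (hα : ∀ i, max |uplus i| |uminus i| ≤ α i)
    (F : ZMod N → ℝ)
    (hF : ∀ i, F i
      = (f (ρ (i+1) 0) * uplus i + f (ρ i (Fin.last k)) * uminus i) / 2
        + (α i / 2) * (g (ρ (i+1) 0) - g (ρ i (Fin.last k))))
    (lam : ZMod N → ℝ) (hlam : ∀ i, 0 < lam i)
    (avg avgnew : ZMod N → ℝ)
    (havg : ∀ i, avg i = (1/2) * ∑ r, w r * ρ i r)
    (havgnew : ∀ i, avgnew i = avg i + lam i * (F i - F (i-1)))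
    (hρnonneg : ∀ i r, 0 ≤ ρ i r)
    (hc1 : ∀ i, lam i * (f (ρ i 0) * uplus (i-1) + α (i-1) * g (ρ i 0))
      ≤ w 0 * ρ i 0)
    (hc2 : ∀ i, lam i * (α i * g (ρ i (Fin.last k))
        - f (ρ i (Fin.last k)) * uminus i)
      ≤ w (Fin.last k) * ρ i (Fin.last k))
    -- pre-limited nodal values with the correct cell averages
    (p : ZMod N → Fin (k+1) → ℝ)
    (hp : ∀ i, (1/2) * ∑ r, w r * p i r = avgnew i)
    -- the scaling limiter
    (m : ZMod N → ℝ)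
    (hm_le : ∀ i r, m i ≤ p i r) (hm_mem : ∀ i, ∃ r, p i r = m i)
    (θ : ZMod N → ℝ)
    (hθ : ∀ i, θ i = if m i < avgnew i
      then min (avgnew i / (avgnew i - m i)) 1 else 1)
    (q : ZMod N → Fin (k+1) → ℝ)
    (hq : ∀ i r, q i r = avgnew i + θ i * (p i r - avgnew i)) :
    (∀ i r, 0 ≤ q i r) ∧ ∀ i, (1/2) * ∑ r, w r * q i r = avgnew i := by
  -- `0 ≠ last k` since `k ≥ 1`
  have h0l : (0 : Fin (k+1)) ≠ Fin.last k := by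
    simp [Fin.ext_iff, Fin.last]
    omega
  -- splitting off the two boundary nodes from a sum
  have hsplit : ∀ (v : Fin (k+1) → ℝ), ∑ r, v r
      = v 0 + v (Fin.last k)
        + ∑ r ∈ Finset.univ \ {0, Fin.last k}, v r := by
    intro v
    have hsub : ({0, Fin.last k} : Finset (Fin (k+1))) ⊆ Finset.univ :=
      Finset.subset_univ _
    rw [← Finset.sum_sdiff hsub, Finset.sum_pair h0l]
    ring
  -- the updated averages are nonnegative
  have hAnn : ∀ i, 0 ≤ avgnew i := by
    intro i
    have hFm := hF (i-1)
    rw [sub_add_cancel] at hFm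
    have hdec : avgnew i
        = (1/2) * (∑ r ∈ Finset.univ \ {0, Fin.last k}, w r * ρ i r)
          + ((1/2) * (w 0 * ρ i 0)
            - (lam i / 2) * (f (ρ i 0) * uplus (i-1) + α (i-1) * g (ρ i 0)))
          + ((1/2) * (w (Fin.last k) * ρ i (Fin.last k))
            - (lam i / 2) * (α i * g (ρ i (Fin.last k))
                - f (ρ i (Fin.last k)) * uminus i))
          + (lam i / 2) * (f (ρ (i+1) 0) * uplus i + α i * g (ρ (i+1) 0))
          + (lam i / 2) * (α (i-1) * g (ρ (i-1) (Fin.last k))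
              - f (ρ (i-1) (Fin.last k)) * uminus (i-1)) := by
      rw [havgnew, havg, hF i, hFm, hsplit (fun r => w r * ρ i r)]
      ring
    have hint : 0 ≤ ∑ r ∈ Finset.univ \ {0, Fin.last k}, w r * ρ i r :=
      Finset.sum_nonneg fun r _ => mul_nonneg (hw r).le (hρnonneg i r)
    have hT1 : 0 ≤ (1/2) * (w 0 * ρ i 0)
        - (lam i / 2) * (f (ρ i 0) * uplus (i-1) + α (i-1) * g (ρ i 0)) := by
      linarith [hc1 i]
    have hT2 : 0 ≤ (1/2) * (w (Fin.last k) * ρ i (Fin.last k))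
        - (lam i / 2) * (α i * g (ρ i (Fin.last k))
            - f (ρ i (Fin.last k)) * uminus i) := by
      linarith [hc2 i]
    have hup : |uplus i| ≤ α i := (le_max_left _ _).trans (hα i)
    have hum : |uminus (i-1)| ≤ α (i-1) := (le_max_right _ _).trans (hα (i-1))
    have hT3 : 0 ≤ (lam i / 2)
        * (f (ρ (i+1) 0) * uplus i + α i * g (ρ (i+1) 0)) :=
      mul_nonneg (by linarith [hlam i])
        (lf_flux_aux f g _ _ _ (hρnonneg (i+1) 0)
          (hfg _ (hρnonneg (i+1) 0)) hup).1
    have hT4 : 0 ≤ (lam i / 2)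
        * (α (i-1) * g (ρ (i-1) (Fin.last k))
            - f (ρ (i-1) (Fin.last k)) * uminus (i-1)) :=
      mul_nonneg (by linarith [hlam i])
        (lf_flux_aux f g _ _ _ (hρnonneg (i-1) (Fin.last k))
          (hfg _ (hρnonneg (i-1) (Fin.last k))) hum).2
    linarith [hdec, hint, hT1, hT2, hT3, hT4]
  constructor
  · intro i r
    rw [hq]
    by_cases hcase : m i < avgnew i
    · rw [hθ, if_pos hcase]
      set A := avgnew i with hAdef
      have hApos : 0 ≤ A := hAnn i
      have hAm : 0 < A - m i := by linarith
      have hθ0 : 0 ≤ min (A / (A - m i)) 1 :=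
        le_min (div_nonneg hApos hAm.le) zero_le_one
      have hθle : min (A / (A - m i)) 1 ≤ A / (A - m i) := min_le_left _ _
      have hmul : min (A / (A - m i)) 1 * (A - m i) ≤ A := by
        calc min (A / (A - m i)) 1 * (A - m i)
            ≤ (A / (A - m i)) * (A - m i) :=
              mul_le_mul_of_nonneg_right hθle hAm.le
          _ = A := div_mul_cancel₀ A hAm.ne'
      have hpm : m i - A ≤ p i r - A := by linarith [hm_le i r]
      have := mul_le_mul_of_nonneg_left hpm hθ0
      nlinarith
    · rw [hθ, if_neg hcase]
      push_neg at hcase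
      have := hm_le i r
      have := hAnn i
      linarith
  · intro i
    have hs : ∑ r, w r * q i r
        = (1 - θ i) * avgnew i * (∑ r, w r) + θ i * ∑ r, w r * p i r := by
      rw [Finset.mul_sum, Finset.mul_sum, ← Finset.sum_add_distrib]
      apply Finset.sum_congr rfl
      intro r _
      rw [hq]
      ring
    have hp' : ∑ r, w r * p i r = 2 * avgnew i := by linarith [hp i]
    rw [hs, hwsum, hp']
    ring
end

section
/- Weak positivity of the Euler-forward step in two dimensions (Lemma 3.1). Assume all nodal values are nonnegative: ρ_{ij}^{rs} ≥ 0 for all i, j, r, s. Assume that for every i, j and every node index r, s ∈ {1,…,k+1} the time-step constraints hold: λ^x_i · ( f(ρ_{ij}^{1s}) u^{x,+}_{i−½,j,s} + α^x_{i−½,j,s} g(ρ_{ij}^{1s}) ) ≤ (w_1/2) ρ_{ij}^{1s}; λ^x_i · ( α^x_{i+½,j,s} g(ρ_{ij}^{(k+1)s}) − f(ρ_{ij}^{(k+1)s}) u^{x,−}_{i+½,j,s} ) ≤ (w_{k+1}/2) ρ_{ij}^{(k+1)s}; λ^y_j · ( f(ρ_{ij}^{r1}) u^{y,+}_{i,j−½,r}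 + α^y_{i,j−½,r} g(ρ_{ij}^{r1}) ) ≤ (w_1/2) ρ_{ij}^{r1}; and λ^y_j · ( α^y_{i,j+½,r} g(ρ_{ij}^{r(k+1)}) − f(ρ_{ij}^{r(k+1)}) u^{y,−}_{i,j+½,r} ) ≤ (w_{k+1}/2) ρ_{ij}^{r(k+1)}. Then the updated cell averages satisfy ρ̄_{ij}^{new} ≥ 0 for all (i,j). -/
open BigOperators


lemma aux_fluxpos (fa ga u a : ℝ) (hf : 0 ≤ fa) (hfg : fa ≤ ga) (hu : |u| ≤ a) :
    0 ≤ fa * u + a * ga := by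
  nlinarith [neg_abs_le u, abs_nonneg u, le_abs_self u]

lemma aux_fluxneg (fa ga u a : ℝ) (hf : 0 ≤ fa) (hfg : fa ≤ ga) (hu : |u| ≤ a) :
    0 ≤ a * ga - fa * u := by
  have := aux_fluxpos fa ga (-u) a hf hfg (by rwa [abs_neg])
  linarith

/-- Weak positivity of the Euler-forward step in two dimensions (Lemma 3.1):
if all nodal values are nonnegative and the time-step constraints hold, the
updated cell averages are nonnegative. -/
theorem weak_positivity_euler_forward_2d
    (k Nx Ny : ℕ) (hk : 1 ≤ k) [NeZero Nx] [NeZero Ny]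
    (hNx : 2 ≤ Nx) (hNy : 2 ≤ Ny)
    (w : Fin (k+1) → ℝ) (hw : ∀ r, 0 < w r) (hwsum : ∑ r, w r = 2)
    (ρ : ZMod Nx → ZMod Ny → Fin (k+1) → Fin (k+1) → ℝ)
    (f g : ℝ → ℝ) (hfg : ∀ s, 0 ≤ s → 0 ≤ f s ∧ f s ≤ g s)
    -- x-interface data: interface (i+½, j), node index s
    (uxminus uxplus αx : ZMod Nx → ZMod Ny → Fin (k+1) → ℝ)
    (hαx : ∀ i j s, max |uxplus i j s| |uxminus i j s| ≤ αx i j s)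
    -- y-interface data: interface (i, j+½), node index r
    (uyminus uyplus αy : ZMod Nx → ZMod Ny → Fin (k+1) → ℝ)
    (hαy : ∀ i j r, max |uyplus i j r| |uyminus i j r| ≤ αy i j r)
    (Fx : ZMod Nx → ZMod Ny → Fin (k+1) → ℝ)
    (hFx : ∀ i j s, Fx i j s
      = (f (ρ (i+1) j 0 s) * uxplus i j s
          + f (ρ i j (Fin.last k) s) * uxminus i j s) / 2
        + (αx i j s / 2) * (g (ρ (i+1) j 0 s) - g (ρ i j (Fin.last k) s)))
    (Fy : ZMod Nx → ZMod Ny → Fin (k+1) → ℝ)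
    (hFy : ∀ i j r, Fy i j r
      = (f (ρ i (j+1) r 0) * uyplus i j r
          + f (ρ i j r (Fin.last k)) * uyminus i j r) / 2
        + (αy i j r / 2) * (g (ρ i (j+1) r 0) - g (ρ i j r (Fin.last k))))
    (lamx : ZMod Nx → ℝ) (hlamx : ∀ i, 0 < lamx i)
    (lamy : ZMod Ny → ℝ) (hlamy : ∀ j, 0 < lamy j)
    (avg avgnew : ZMod Nx → ZMod Ny → ℝ)
    (havg : ∀ i j, avg i j = (1/4) * ∑ r, ∑ s, w r * w s * ρ i j r s)
    (havgnew : ∀ i j, avgnew i j = avg i j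
      + (lamx i / 2) * ∑ s, w s * (Fx i j s - Fx (i-1) j s)
      + (lamy j / 2) * ∑ r, w r * (Fy i j r - Fy i (j-1) r))
    (hρnonneg : ∀ i j r s, 0 ≤ ρ i j r s)
    (hcx1 : ∀ i j s, lamx i * (f (ρ i j 0 s) * uxplus (i-1) j s
        + αx (i-1) j s * g (ρ i j 0 s)) ≤ (w 0 / 2) * ρ i j 0 s)
    (hcx2 : ∀ i j s, lamx i * (αx i j s * g (ρ i j (Fin.last k) s)
        - f (ρ i j (Fin.last k) s) * uxminus i j s)
      ≤ (w (Fin.last k) / 2) * ρ i j (Fin.last k) s)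
    (hcy1 : ∀ i j r, lamy j * (f (ρ i j r 0) * uyplus i (j-1) r
        + αy i (j-1) r * g (ρ i j r 0)) ≤ (w 0 / 2) * ρ i j r 0)
    (hcy2 : ∀ i j r, lamy j * (αy i j r * g (ρ i j r (Fin.last k))
        - f (ρ i j r (Fin.last k)) * uyminus i j r)
      ≤ (w (Fin.last k) / 2) * ρ i j r (Fin.last k)) :
    ∀ i j, 0 ≤ avgnew i j := by

  intro i j
  have h0last : (0 : Fin (k+1)) ≠ Fin.last k := by
    apply Fin.ne_of_val_ne
    simp only [Fin.val_zero, Fin.val_last]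
    omega
  have hii : (i - 1 + 1 : ZMod Nx) = i := by ring
  have hjj : (j - 1 + 1 : ZMod Ny) = j := by ring
  -- nonnegativity of the per-node X quantity
  have hXs : ∀ s, 0 ≤ (1/4) * (∑ r, w r * ρ i j r s)
      + lamx i * (Fx i j s - Fx (i-1) j s) := by
    intro s
    have hsum : w 0 * ρ i j 0 s + w (Fin.last k) * ρ i j (Fin.last k) s
        ≤ ∑ r, w r * ρ i j r s := by
      have hpair : ∑ r ∈ ({0, Fin.last k} : Finset (Fin (k+1))), w r * ρ i j r s
          = w 0 * ρ i j 0 s + w (Fin.last k) * ρ i j (Fin.last k) s :=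
        Finset.sum_pair h0last
      calc w 0 * ρ i j 0 s + w (Fin.last k) * ρ i j (Fin.last k) s
          = ∑ r ∈ ({0, Fin.last k} : Finset (Fin (k+1))), w r * ρ i j r s := hpair.symm
        _ ≤ ∑ r, w r * ρ i j r s :=
            Finset.sum_le_sum_of_subset_of_nonneg (Finset.subset_univ _)
              (fun r _ _ => mul_nonneg (hw r).le (hρnonneg i j r s))
    have h1 := hcx1 i j s
    have h2 := hcx2 i j s
    have hp := hfg _ (hρnonneg (i+1) j 0 s)
    have hm := hfg _ (hρnonneg (i-1) j (Fin.last k) s)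
    have h3 : 0 ≤ f (ρ (i+1) j 0 s) * uxplus i j s + αx i j s * g (ρ (i+1) j 0 s) :=
      aux_fluxpos _ _ _ _ hp.1 hp.2 (le_trans (le_max_left _ _) (hαx i j s))
    have h4 : 0 ≤ αx (i-1) j s * g (ρ (i-1) j (Fin.last k) s)
        - f (ρ (i-1) j (Fin.last k) s) * uxminus (i-1) j s :=
      aux_fluxneg _ _ _ _ hm.1 hm.2 (le_trans (le_max_right _ _) (hαx (i-1) j s))
    have h3' : 0 ≤ (lamx i / 2) * (f (ρ (i+1) j 0 s) * uxplus i j s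
        + αx i j s * g (ρ (i+1) j 0 s)) := mul_nonneg (by linarith [hlamx i]) h3
    have h4' : 0 ≤ (lamx i / 2) * (αx (i-1) j s * g (ρ (i-1) j (Fin.last k) s)
        - f (ρ (i-1) j (Fin.last k) s) * uxminus (i-1) j s) :=
      mul_nonneg (by linarith [hlamx i]) h4
    have key : lamx i * (Fx i j s - Fx (i-1) j s)
        = (lamx i / 2) * (f (ρ (i+1) j 0 s) * uxplus i j s
            + αx i j s * g (ρ (i+1) j 0 s))
          + (lamx i / 2) * (αx (i-1) j s * g (ρ (i-1) j (Fin.last k) s)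
            - f (ρ (i-1) j (Fin.last k) s) * uxminus (i-1) j s)
          - (1/2) * (lamx i * (αx i j s * g (ρ i j (Fin.last k) s)
            - f (ρ i j (Fin.last k) s) * uxminus i j s))
          - (1/2) * (lamx i * (f (ρ i j 0 s) * uxplus (i-1) j s
            + αx (i-1) j s * g (ρ i j 0 s))) := by
      rw [hFx i j s, hFx (i-1) j s, hii]
      ring
    linarith [hsum, h1, h2, h3', h4', key.ge, key.le]
  -- nonnegativity of the per-node Y quantity
  have hYr : ∀ r, 0 ≤ (1/4) * (∑ s, w s * ρ i j r s)
      + lamy j * (Fy i j r - Fy i (j-1) r) := by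
    intro r
    have hsum : w 0 * ρ i j r 0 + w (Fin.last k) * ρ i j r (Fin.last k)
        ≤ ∑ s, w s * ρ i j r s := by
      have hpair : ∑ s ∈ ({0, Fin.last k} : Finset (Fin (k+1))), w s * ρ i j r s
          = w 0 * ρ i j r 0 + w (Fin.last k) * ρ i j r (Fin.last k) :=
        Finset.sum_pair h0last
      calc w 0 * ρ i j r 0 + w (Fin.last k) * ρ i j r (Fin.last k)
          = ∑ s ∈ ({0, Fin.last k} : Finset (Fin (k+1))), w s * ρ i j r s := hpair.symm
        _ ≤ ∑ s, w s * ρ i j r s :=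
            Finset.sum_le_sum_of_subset_of_nonneg (Finset.subset_univ _)
              (fun s _ _ => mul_nonneg (hw s).le (hρnonneg i j r s))
    have h1 := hcy1 i j r
    have h2 := hcy2 i j r
    have hp := hfg _ (hρnonneg i (j+1) r 0)
    have hm := hfg _ (hρnonneg i (j-1) r (Fin.last k))
    have h3 : 0 ≤ f (ρ i (j+1) r 0) * uyplus i j r + αy i j r * g (ρ i (j+1) r 0) :=
      aux_fluxpos _ _ _ _ hp.1 hp.2 (le_trans (le_max_left _ _) (hαy i j r))
    have h4 : 0 ≤ αy i (j-1) r * g (ρ i (j-1) r (Fin.last k))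
        - f (ρ i (j-1) r (Fin.last k)) * uyminus i (j-1) r :=
      aux_fluxneg _ _ _ _ hm.1 hm.2 (le_trans (le_max_right _ _) (hαy i (j-1) r))
    have h3' : 0 ≤ (lamy j / 2) * (f (ρ i (j+1) r 0) * uyplus i j r
        + αy i j r * g (ρ i (j+1) r 0)) := mul_nonneg (by linarith [hlamy j]) h3
    have h4' : 0 ≤ (lamy j / 2) * (αy i (j-1) r * g (ρ i (j-1) r (Fin.last k))
        - f (ρ i (j-1) r (Fin.last k)) * uyminus i (j-1) r) :=
      mul_nonneg (by linarith [hlamy j]) h4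
    have key : lamy j * (Fy i j r - Fy i (j-1) r)
        = (lamy j / 2) * (f (ρ i (j+1) r 0) * uyplus i j r
            + αy i j r * g (ρ i (j+1) r 0))
          + (lamy j / 2) * (αy i (j-1) r * g (ρ i (j-1) r (Fin.last k))
            - f (ρ i (j-1) r (Fin.last k)) * uyminus i (j-1) r)
          - (1/2) * (lamy j * (αy i j r * g (ρ i j r (Fin.last k))
            - f (ρ i j r (Fin.last k)) * uyminus i j r))
          - (1/2) * (lamy j * (f (ρ i j r 0) * uyplus i (j-1) r
            + αy i (j-1) r * g (ρ i j r 0))) := by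
      rw [hFy i j r, hFy i (j-1) r, hjj]
      ring
    linarith [hsum, h1, h2, h3', h4', key.ge, key.le]
  have hsumX : 0 ≤ ∑ s, w s * ((1/4) * (∑ r, w r * ρ i j r s)
      + lamx i * (Fx i j s - Fx (i-1) j s)) :=
    Finset.sum_nonneg (fun s _ => mul_nonneg (hw s).le (hXs s))
  have hsumY : 0 ≤ ∑ r, w r * ((1/4) * (∑ s, w s * ρ i j r s)
      + lamy j * (Fy i j r - Fy i (j-1) r)) :=
    Finset.sum_nonneg (fun r _ => mul_nonneg (hw r).le (hYr r))
  have swapX : ∑ s, w s * ∑ r, w r * ρ i j r s = ∑ r, ∑ s, w r * w s * ρ i j r s := by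
    calc ∑ s, w s * ∑ r, w r * ρ i j r s
        = ∑ s, ∑ r, w r * w s * ρ i j r s := by
          refine Finset.sum_congr rfl fun s _ => ?_
          rw [Finset.mul_sum]
          exact Finset.sum_congr rfl fun r _ => by ring
      _ = ∑ r, ∑ s, w r * w s * ρ i j r s := Finset.sum_comm 
  have swapY : ∑ r, w r * ∑ s, w s * ρ i j r s = ∑ r, ∑ s, w r * w s * ρ i j r s := by
    refine Finset.sum_congr rfl fun r _ => ?_
    rw [Finset.mul_sum]
    exact Finset.sum_congr rfl fun s _ => by ring
  have splitX : ∑ s, w s * ((1/4) * (∑ r, w r * ρ i j r s)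
        + lamx i * (Fx i j s - Fx (i-1) j s))
      = (1/4) * (∑ s, w s * ∑ r, w r * ρ i j r s)
        + lamx i * ∑ s, w s * (Fx i j s - Fx (i-1) j s) := by
    rw [Finset.mul_sum, Finset.mul_sum, ← Finset.sum_add_distrib]
    exact Finset.sum_congr rfl fun s _ => by ring
  have splitY : ∑ r, w r * ((1/4) * (∑ s, w s * ρ i j r s)
        + lamy j * (Fy i j r - Fy i (j-1) r))
      = (1/4) * (∑ r, w r * ∑ s, w s * ρ i j r s)
        + lamy j * ∑ r, w r * (Fy i j r - Fy i (j-1) r) := by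
    rw [Finset.mul_sum, Finset.mul_sum, ← Finset.sum_add_distrib]
    exact Finset.sum_congr rfl fun r _ => by ring
  have e : avgnew i j
      = (1/2) * (∑ s, w s * ((1/4) * (∑ r, w r * ρ i j r s)
          + lamx i * (Fx i j s - Fx (i-1) j s)))
        + (1/2) * (∑ r, w r * ((1/4) * (∑ s, w s * ρ i j r s)
          + lamy j * (Fy i j r - Fy i (j-1) r))) := by
    rw [havgnew i j, havg i j, splitX, splitY, swapX, swapY]
    ring
  rw [e]
  linarith [hsumX, hsumY]
end

section
/- Discrete entropy inequality for the two-dimensional semi-discrete DG scheme (Theorem 3.1). Along any differentiable solution t ↦ (ρ_{ij}(t)) of the 2D semi-discrete scheme, the discrete entropy satisfies dẼ/dt = − Σ_{ij} (h^x_i h^y_j/4) Σ_{r,s} w_r w_s · f((ρ_{ij})_{rs}) · ( ((u^x_{ij})_{rs})² + ((u^y_{ij})_{rs})² ) − Σ_{ij} (h^y_j/2) Σ_s w_s (α^x_{i+½,j,s}/2) ( g((ρ_{(i+1)j})_{1s}) − g((ρ_{ij})_{(k+1)s}) ) ( H′((ρ_{(i+1)j})_{1s}) − H′((ρ_{ij})_{(k+1)s})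 ) − Σ_{ij} (h^x_i/2) Σ_r w_r (α^y_{i,j+½,r}/2) ( g((ρ_{i(j+1)})_{r1}) − g((ρ_{ij})_{r(k+1)}) ) ( H′((ρ_{i(j+1)})_{r1}) − H′((ρ_{ij})_{r(k+1)}) ). Since H′ is strictly increasing, g is nondecreasing, the α coefficients are nonnegative and f ≥ 0, this gives dẼ/dt ≤ −Ĩ, where Ĩ = Σ_{ij} (h^x_i h^y_j/4) Σ_{r,s} w_r w_s f((ρ_{ij})_{rs}) ( ((u^x_{ij})_{rs})² + ((u^y_{ij})_{rs})² ) ≥ 0. -/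
/-!
Because `ξ` is the variational derivative of `Ẽ` (this uses the symmetry of `K`),
`dẼ/dt` is the quadrature of `ξ ∂ₜρ`. The scheme splits `∂ₜρ` into an `x`- and a `y`-part,
each a one-dimensional DG derivative along periodic grid lines. On each cell the
summation-by-parts identity `MD + DᵀM = B` moves that derivative from the flux `f(ρ) u` onto `ξ`,
which yields `-∑ w f(ρ) u²` plus endpoint terms. Summed around a periodic line, the central flux
for `ξ` and the Lax–Friedrichs flux for `f(ρ) u` reduce the endpoint terms at each interface to
`-(α/2) [g(ρ)] [ξ]`. Since `V` and `K` are single-valued, `[ξ] = [H′(ρ)]`, and this term is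
nonpositive because `g` and `H′` are both nondecreasing.
-/

open Matrix BigOperators

theorem sbp_dotProduct_mulVec {R n : Type*} [CommRing R] [Fintype n] {M D B : Matrix n n R}
    (hM : Mᵀ = M) (hSBP : M * D + Dᵀ * M = B) {ξ v p q a b : n → R}
    (ha : M *ᵥ a = -((Dᵀ * M) *ᵥ ξ) + B *ᵥ p) (hb : M *ᵥ b = -((Dᵀ * M) *ᵥ v) + B *ᵥ q) :
    ξ ⬝ᵥ (M *ᵥ b) = -(M *ᵥ a ⬝ᵥ v) - B *ᵥ (ξ - p) ⬝ᵥ v + ξ ⬝ᵥ (B *ᵥ q) := by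
  have hDξ : (Dᵀ * M) *ᵥ ξ = B *ᵥ p - M *ᵥ a := by rw [ha]; abel
  have hadj : ξ ⬝ᵥ ((Dᵀ * M) *ᵥ v) = (B *ᵥ ξ - (Dᵀ * M) *ᵥ ξ) ⬝ᵥ v := by
    rw [dotProduct_mulVec, ← mulVec_transpose, transpose_mul, transpose_transpose, hM,
      ← sub_mulVec, ← eq_sub_of_add_eq hSBP]
  rw [hb, dotProduct_add, dotProduct_neg, hadj, hDξ, mulVec_sub]
  simp only [sub_dotProduct]
  ring

theorem dotProduct_diagonal_mulVec_smul {R n : Type*} [CommSemiring R] [Fintype n]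
    [DecidableEq n] (w x y : n → R) (c : R) :
    x ⬝ᵥ (diagonal w *ᵥ (c • y)) = c * ∑ r, w r * (x r * y r) := by
  simp only [dotProduct, mulVec_diagonal, Pi.smul_apply, smul_eq_mul, Finset.mul_sum]
  exact Finset.sum_congr rfl fun r _ => by ring

section Boundary

variable {R : Type*} [CommRing R] {n : ℕ}

def sbpBoundary (n : ℕ) : Matrix (Fin (n+1)) (Fin (n+1)) R :=
  diagonal fun r => if r = 0 then -1 else if r = Fin.last n then 1 else 0

def endpointVec (a b : R) : Fin (n+1) → R :=
  fun r => if r = 0 then a else if r = Fin.last n then b else 0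

theorem sbpBoundary_mulVec_dotProduct (h0 : (0 : Fin (n+1)) ≠ Fin.last n)
    (v c : Fin (n+1) → R) :
    sbpBoundary n *ᵥ v ⬝ᵥ c = -(v 0 * c 0) + v (Fin.last n) * c (Fin.last n) := by
  rw [dotProduct, Fintype.sum_eq_add 0 (Fin.last n) h0]
  · simp [sbpBoundary, mulVec_diagonal, h0.symm]
  · intro r ⟨hr0, hrl⟩
    simp [sbpBoundary, mulVec_diagonal, hr0, hrl]

theorem endpointVec_zero (a b : R) : endpointVec (n := n) a b 0 = a := if_pos rfl

theorem endpointVec_last (h0 : (0 : Fin (n+1)) ≠ Fin.last n) (a b : R) :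
    endpointVec a b (Fin.last n) = b := by
  simp [endpointVec, h0.symm]

end Boundary

section Cell

variable {n : ℕ} {w : Fin (n+1) → ℝ} {D : Matrix (Fin (n+1)) (Fin (n+1)) ℝ}

noncomputable def dgDeriv (w : Fin (n+1) → ℝ) (D : Matrix (Fin (n+1)) (Fin (n+1)) ℝ) (h : ℝ)
    (v : Fin (n+1) → ℝ) (fluxL fluxR : ℝ) : Fin (n+1) → ℝ :=
  (2 / h) • ((diagonal w)⁻¹ *ᵥ
    (-((Dᵀ * diagonal w) *ᵥ v) + sbpBoundary n *ᵥ endpointVec fluxL fluxR))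

theorem diagonal_mulVec_smul_dgDeriv (hw : ∀ r, w r ≠ 0) {h : ℝ} (hh : h ≠ 0)
    (v : Fin (n+1) → ℝ) (fluxL fluxR : ℝ) :
    diagonal w *ᵥ ((h / 2) • dgDeriv w D h v fluxL fluxR)
      = -((Dᵀ * diagonal w) *ᵥ v) + sbpBoundary n *ᵥ endpointVec fluxL fluxR := by
  have hdet : IsUnit (diagonal w).det := by
    rw [det_diagonal]; exact (Finset.prod_ne_zero_iff.2 fun r _ => hw r).isUnit
  rw [dgDeriv, smul_smul, div_mul_div_comm, mul_comm h, div_self (mul_ne_zero two_ne_zero hh),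
    one_smul, mulVec_mulVec, mul_nonsing_inv _ hdet, one_mulVec]

theorem dgDeriv_integration_by_parts (h0 : (0 : Fin (n+1)) ≠ Fin.last n) (hw : ∀ r, w r ≠ 0)
    (hSBP : diagonal w * D + Dᵀ * diagonal w = sbpBoundary n) {h : ℝ} (hh : h ≠ 0)
    {ξ φ u X : Fin (n+1) → ℝ} {ξm ξp Fm Fp : ℝ} (hu : u = dgDeriv w D h ξ ξm ξp)
    (hX : X = dgDeriv w D h (fun r => φ r * u r) Fm Fp) :
    h / 2 * ∑ r, w r * (ξ r * X r)
      = -(h / 2 * ∑ r, w r * (φ r * u r ^ 2))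
        + (ξ 0 - ξm) * (φ 0 * u 0) - (ξ (Fin.last n) - ξp) * (φ (Fin.last n) * u (Fin.last n))
        - ξ 0 * Fm + ξ (Fin.last n) * Fp := by
  have key := sbp_dotProduct_mulVec (diagonal_transpose w) hSBP
    (hu ▸ diagonal_mulVec_smul_dgDeriv hw hh ξ ξm ξp)
    (hX ▸ diagonal_mulVec_smul_dgDeriv hw hh (fun r => φ r * u r) Fm Fp)
  rw [dotProduct_diagonal_mulVec_smul, dotProduct_comm (diagonal w *ᵥ _),
    dotProduct_diagonal_mulVec_smul, sbpBoundary_mulVec_dotProduct h0, dotProduct_comm ξ,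
    sbpBoundary_mulVec_dotProduct h0] at key
  simp only [Pi.sub_apply, endpointVec_zero, endpointVec_last h0] at key
  rw [key]
  have hsq : ∑ r, w r * (φ r * u r * u r) = ∑ r, w r * (φ r * u r ^ 2) :=
    Finset.sum_congr rfl fun r _ => by ring
  rw [hsq]; ring

theorem periodic_dgDeriv_integration_by_parts {N : ℕ} [NeZero N]
    (h0 : (0 : Fin (n+1)) ≠ Fin.last n) (hw : ∀ r, w r ≠ 0)
    (hSBP : diagonal w * D + Dᵀ * diagonal w = sbpBoundary n)
    {h : ZMod N → ℝ} (hh : ∀ i, h i ≠ 0) {ξ φ u X : ZMod N → Fin (n+1) → ℝ}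
    {ξhat F d : ZMod N → ℝ} (hξhat : ∀ i, ξhat i = (ξ i (Fin.last n) + ξ (i+1) 0) / 2)
    (hu : ∀ i, u i = dgDeriv w D (h i) (ξ i) (ξhat (i-1)) (ξhat i))
    (hF : ∀ i, F i = (φ (i+1) 0 * u (i+1) 0 + φ i (Fin.last n) * u i (Fin.last n)) / 2 + d i)
    (hX : ∀ i, X i = dgDeriv w D (h i) (fun r => φ i r * u i r) (F (i-1)) (F i)) :
    ∑ i, h i / 2 * ∑ r, w r * (ξ i r * X i r)
      = -∑ i, h i / 2 * ∑ r, w r * (φ i r * u i r ^ 2)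
        - ∑ i, d i * (ξ (i+1) 0 - ξ i (Fin.last n)) := by
  set A : ZMod N → ℝ := fun i =>
    -(ξ i (Fin.last n) - ξhat i) * (φ i (Fin.last n) * u i (Fin.last n)) + ξ i (Fin.last n) * F i
  set G : ZMod N → ℝ := fun m =>
    (ξ (m+1) 0 - ξhat m) * (φ (m+1) 0 * u (m+1) 0) - ξ (m+1) 0 * F m
  have hcell : ∀ i, h i / 2 * ∑ r, w r * (ξ i r * X i r)
      = -(h i / 2 * ∑ r, w r * (φ i r * u i r ^ 2)) + (A i + G (i-1)) := by
    intro i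
    rw [dgDeriv_integration_by_parts h0 hw hSBP (hh i) (hu i) (hX i)]
    simp only [A, G, sub_add_cancel]
    ring
  have hinterface : ∀ i, A i + G i = -(d i * (ξ (i+1) 0 - ξ i (Fin.last n))) := by
    intro i
    simp only [A, G, hξhat, hF]
    ring
  -- the left-end term of cell `i` lives on interface `i - 1`
  have hshift : ∑ i, G (i - 1) = ∑ i, G i := (Equiv.subRight 1).sum_comp G
  rw [Finset.sum_congr rfl fun i _ => hcell i, Finset.sum_add_distrib, Finset.sum_add_distrib,
    hshift, ← Finset.sum_add_distrib, Finset.sum_congr rfl fun i _ => hinterface i]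
  simp only [Finset.sum_neg_distrib]
  ring

end Cell

section Quadrature

variable {α β γ : Type*} [Fintype α] [Fintype β] [Fintype γ]

noncomputable def nodalQuad (hx : α → ℝ) (hy : β → ℝ) (w : γ → ℝ)
    (F : α → β → γ → γ → ℝ) : ℝ :=
  ∑ i, ∑ j, hx i * hy j / 4 * ∑ r, ∑ s, w r * w s * F i j r s

variable {hx : α → ℝ} {hy : β → ℝ} {w : γ → ℝ}

theorem nodalQuad_add (F G : α → β → γ → γ → ℝ) :
    nodalQuad hx hy w (fun i j r s => F i j r s + G i j r s)
      = nodalQuad hx hy w F + nodalQuad hx hy w G := by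
  simp only [nodalQuad, mul_add, Finset.sum_add_distrib]

theorem nodalQuad_comm (F : α → β → γ → γ → ℝ) :
    nodalQuad hx hy w F = nodalQuad hy hx w (fun j i s r => F i j r s) := by
  unfold nodalQuad
  rw [Finset.sum_comm]
  refine Finset.sum_congr rfl fun j _ => Finset.sum_congr rfl fun i _ => ?_
  rw [Finset.sum_comm, mul_comm (hx i)]
  simp only [mul_comm (w _) (w _)]

theorem nodalQuad_nonneg (hhx : ∀ i, 0 ≤ hx i) (hhy : ∀ j, 0 ≤ hy j) (hw : ∀ r, 0 ≤ w r)
    {F : α → β → γ → γ → ℝ} (hF : ∀ i j r s, 0 ≤ F i j r s) : 0 ≤ nodalQuad hx hy w F :=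
  Finset.sum_nonneg fun i _ => Finset.sum_nonneg fun j _ =>
    mul_nonneg (div_nonneg (mul_nonneg (hhx i) (hhy j)) zero_le_four) <|
      Finset.sum_nonneg fun r _ => Finset.sum_nonneg fun s _ =>
        mul_nonneg (mul_nonneg (hw r) (hw s)) (hF i j r s)

theorem nodalQuad_eq_sum_xLines (F : α → β → γ → γ → ℝ) :
    nodalQuad hx hy w F = ∑ j, ∑ s, hy j / 2 * w s * ∑ i, hx i / 2 * ∑ r, w r * F i j r s := by
  unfold nodalQuad
  simp only [Finset.mul_sum]
  rw [Finset.sum_comm]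
  refine Finset.sum_congr rfl fun j _ =>
    ((Finset.sum_congr rfl fun i _ => Finset.sum_comm).trans Finset.sum_comm).trans
      (Finset.sum_congr rfl fun s _ => Finset.sum_congr rfl fun i _ =>
        Finset.sum_congr rfl fun r _ => by ring)

theorem nodalQuad_eq_neg_sub_of_xLines {F G : α → β → γ → γ → ℝ} {J : α → β → γ → ℝ}
    (hline : ∀ j s, ∑ i, hx i / 2 * ∑ r, w r * F i j r s
      = -∑ i, hx i / 2 * ∑ r, w r * G i j r s - ∑ i, J i j s) :
    nodalQuad hx hy w F = -nodalQuad hx hy w G - ∑ i, ∑ j, hy j / 2 * ∑ s, w s * J i j s := by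
  rw [nodalQuad_eq_sum_xLines, nodalQuad_eq_sum_xLines]
  simp only [hline, mul_sub, mul_neg, Finset.sum_sub_distrib, Finset.sum_neg_distrib]
  congr 1
  simp only [Finset.mul_sum]
  symm
  rw [Finset.sum_comm]
  exact Finset.sum_congr rfl fun j _ => Finset.sum_comm.trans <|
    Finset.sum_congr rfl fun s _ => Finset.sum_congr rfl fun i _ => by ring

end Quadrature

section Directional

variable {n : ℕ} {w : Fin (n+1) → ℝ} {D : Matrix (Fin (n+1)) (Fin (n+1)) ℝ}

theorem nodalQuad_mul_xFlux {N : ℕ} [NeZero N] {β : Type*} [Fintype β]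
    (h0 : (0 : Fin (n+1)) ≠ Fin.last n) (hw : ∀ r, w r ≠ 0)
    (hSBP : diagonal w * D + Dᵀ * diagonal w = sbpBoundary n)
    {hx : ZMod N → ℝ} (hhx : ∀ i, hx i ≠ 0) (hy : β → ℝ)
    {ξ φ u X : ZMod N → β → Fin (n+1) → Fin (n+1) → ℝ} {ξhat F d : ZMod N → β → Fin (n+1) → ℝ}
    (hξhat : ∀ i j s, ξhat i j s = (ξ i j (Fin.last n) s + ξ (i+1) j 0 s) / 2)
    (hu : ∀ i j s, (fun r => u i j r s)
      = dgDeriv w D (hx i) (fun r => ξ i j r s) (ξhat (i-1) j s) (ξhat i j s))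
    (hF : ∀ i j s, F i j s = (φ (i+1) j 0 s * u (i+1) j 0 s
      + φ i j (Fin.last n) s * u i j (Fin.last n) s) / 2 + d i j s)
    (hX : ∀ i j s, (fun r => X i j r s)
      = dgDeriv w D (hx i) (fun r => φ i j r s * u i j r s) (F (i-1) j s) (F i j s)) :
    nodalQuad hx hy w (fun i j r s => ξ i j r s * X i j r s)
      = -nodalQuad hx hy w (fun i j r s => φ i j r s * u i j r s ^ 2)
        - ∑ i, ∑ j, hy j / 2 * ∑ s, w s * (d i j s * (ξ (i+1) j 0 s - ξ i j (Fin.last n) s)) :=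
  nodalQuad_eq_neg_sub_of_xLines fun j s =>
    periodic_dgDeriv_integration_by_parts h0 hw hSBP hhx (ξ := fun i r => ξ i j r s)
      (φ := fun i r => φ i j r s) (u := fun i r => u i j r s) (X := fun i r => X i j r s)
      (fun i => hξhat i j s) (fun i => hu i j s) (fun i => hF i j s) (fun i => hX i j s)

theorem nodalQuad_mul_yFlux {N : ℕ} [NeZero N] {α : Type*} [Fintype α]
    (h0 : (0 : Fin (n+1)) ≠ Fin.last n) (hw : ∀ r, w r ≠ 0)
    (hSBP : diagonal w * D + Dᵀ * diagonal w = sbpBoundary n)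
    (hx : α → ℝ) {hy : ZMod N → ℝ} (hhy : ∀ j, hy j ≠ 0)
    {ξ φ u Y : α → ZMod N → Fin (n+1) → Fin (n+1) → ℝ} {ξhat F d : α → ZMod N → Fin (n+1) → ℝ}
    (hξhat : ∀ i j r, ξhat i j r = (ξ i j r (Fin.last n) + ξ i (j+1) r 0) / 2)
    (hu : ∀ i j r, (fun s => u i j r s)
      = dgDeriv w D (hy j) (fun s => ξ i j r s) (ξhat i (j-1) r) (ξhat i j r))
    (hF : ∀ i j r, F i j r = (φ i (j+1) r 0 * u i (j+1) r 0
      + φ i j r (Fin.last n) * u i j r (Fin.last n)) / 2 + d i j r)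
    (hY : ∀ i j r, (fun s => Y i j r s)
      = dgDeriv w D (hy j) (fun s => φ i j r s * u i j r s) (F i (j-1) r) (F i j r)) :
    nodalQuad hx hy w (fun i j r s => ξ i j r s * Y i j r s)
      = -nodalQuad hx hy w (fun i j r s => φ i j r s * u i j r s ^ 2)
        - ∑ i, ∑ j, hx i / 2 * ∑ r, w r * (d i j r * (ξ i (j+1) r 0 - ξ i j r (Fin.last n))) := by
  rw [nodalQuad_comm, nodalQuad_comm (hx := hx), Finset.sum_comm]
  exact nodalQuad_mul_xFlux h0 hw hSBP hhy hx (ξ := fun j i s r => ξ i j r s)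
    (φ := fun j i s r => φ i j r s) (u := fun j i s r => u i j r s)
    (X := fun j i s r => Y i j r s) (d := fun j i r => d i j r)
    (fun j i r => hξhat i j r) (fun j i r => hu i j r) (fun j i r => hF i j r)
    (fun j i r => hY i j r)

end Directional

theorem hasDerivAt_half_sum_sum_mul {P : Type*} [Fintype P] {A : P → P → ℝ}
    (hA : ∀ p q, A p q = A q p) {x : ℝ → P → ℝ} {x' : P → ℝ} {t : ℝ}
    (hx : ∀ p, HasDerivAt (fun τ => x τ p) (x' p) t) :
    HasDerivAt (fun τ => 1 / 2 * ∑ p, ∑ q, A p q * x τ p * x τ q)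
      (∑ p, (∑ q, A p q * x t q) * x' p) t := by
  refine ((HasDerivAt.fun_sum fun p _ => HasDerivAt.fun_sum fun q _ =>
    ((hx p).const_mul (A p q)).mul (hx q)).const_mul (1 / 2)).congr_deriv ?_
  have h1 : ∑ p, ∑ q, A p q * x' p * x t q = ∑ p, (∑ q, A p q * x t q) * x' p := by
    simp only [Finset.sum_mul]
    exact Finset.sum_congr rfl fun p _ => Finset.sum_congr rfl fun q _ => by ring
  have h2 : ∑ p, ∑ q, A p q * x t p * x' q = ∑ p, (∑ q, A p q * x t q) * x' p := by
    rw [Finset.sum_comm, ← h1]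
    exact Finset.sum_congr rfl fun p _ => Finset.sum_congr rfl fun q _ => by rw [hA]; ring
  simp only [Finset.sum_add_distrib, h1, h2]
  ring

theorem Fintype.sum_sum_prod_comm {α β M : Type*} [Fintype α] [Fintype β] [AddCommMonoid M]
    (G : α × β → α × β → M) :
    ∑ p, ∑ q, G p q = ∑ a, ∑ a', ∑ b, ∑ b', G (a, b) (a', b') := by
  rw [← Fintype.sum_prod_type' G]
  refine (Fintype.sum_equiv (Equiv.prodProdProdComm α β α β) _
    (fun y => G (y.1.1, y.2.1) (y.1.2, y.2.2)) fun _ => rfl).trans ?_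
  simp only [Fintype.sum_prod_type]

section Entropy

variable {α β γ : Type*} [Fintype α] [Fintype β] [Fintype γ] {hx : α → ℝ} {hy : β → ℝ}
  {w : γ → ℝ} {t : ℝ}

theorem hasDerivAt_nodalQuad {F : ℝ → α → β → γ → γ → ℝ} {F' : α → β → γ → γ → ℝ}
    (hF : ∀ i j r s, HasDerivAt (fun τ => F τ i j r s) (F' i j r s) t) :
    HasDerivAt (fun τ => nodalQuad hx hy w (F τ)) (nodalQuad hx hy w F') t :=
  HasDerivAt.fun_sum fun i _ => HasDerivAt.fun_sum fun j _ => HasDerivAt.const_mul _ <|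
    HasDerivAt.fun_sum fun r _ => HasDerivAt.fun_sum fun s _ => (hF i j r s).const_mul _

theorem hasDerivAt_interactionEnergy {K : α → β → γ → γ → α → β → γ → γ → ℝ}
    (hK : ∀ i j r s i' j' r' s', K i j r s i' j' r' s' = K i' j' r' s' i j r s)
    {ρ : ℝ → α → β → γ → γ → ℝ} {ρ' : α → β → γ → γ → ℝ}
    (hρ : ∀ i j r s, HasDerivAt (fun τ => ρ τ i j r s) (ρ' i j r s) t) :
    HasDerivAt (fun τ => 1 / 2 * ∑ i, ∑ j, ∑ i', ∑ j', hx i * hy j / 4 * (hx i' * hy j' / 4) *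
        ∑ r, ∑ s, ∑ r', ∑ s', w r * w s * w r' * w s' *
          K i j r s i' j' r' s' * ρ τ i j r s * ρ τ i' j' r' s')
      (nodalQuad hx hy w fun i j r s => (∑ i', ∑ j', hx i' * hy j' / 4 *
        ∑ r', ∑ s', w r' * w s' * K i j r s i' j' r' s' * ρ t i' j' r' s') * ρ' i j r s) t := by
  let m : (α × β) × (γ × γ) → ℝ := fun p => hx p.1.1 * hy p.1.2 / 4 * (w p.2.1 * w p.2.2)
  let A : (α × β) × (γ × γ) → (α × β) × (γ × γ) → ℝ := fun p q =>
    m p * m q * K p.1.1 p.1.2 p.2.1 p.2.2 q.1.1 q.1.2 q.2.1 q.2.2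
  have hA : ∀ p q, A p q = A q p := fun p q => by simp only [A]; rw [hK]; ring
  have := hasDerivAt_half_sum_sum_mul hA (x := fun τ p => ρ τ p.1.1 p.1.2 p.2.1 p.2.2)
    (x' := fun p => ρ' p.1.1 p.1.2 p.2.1 p.2.2) (fun p => hρ _ _ _ _)
  convert this using 1
  · funext τ
    rw [Fintype.sum_sum_prod_comm]
    simp only [Fintype.sum_prod_type, A, m, Finset.mul_sum]
    congr! 8 with i j i' j' r s r' s'
    ring
  · simp only [nodalQuad, Fintype.sum_prod_type, A, m, Finset.mul_sum, Finset.sum_mul]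
    congr! 8 with i j r s i' j' r' s'
    ring

theorem hasDerivAt_entropy {H : ℝ → ℝ} (hH : Differentiable ℝ H) {V : α → β → γ → γ → ℝ}
    {K : α → β → γ → γ → α → β → γ → γ → ℝ}
    (hK : ∀ i j r s i' j' r' s', K i j r s i' j' r' s' = K i' j' r' s' i j r s)
    {ρ : ℝ → α → β → γ → γ → ℝ} {ρ' : α → β → γ → γ → ℝ}
    (hρ : ∀ i j r s, HasDerivAt (fun τ => ρ τ i j r s) (ρ' i j r s) t) :
    HasDerivAt (fun τ => nodalQuad hx hy w (fun i j r s => H (ρ τ i j r s) + V i j r s * ρ τ i j r s)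
        + 1 / 2 * ∑ i, ∑ j, ∑ i', ∑ j', hx i * hy j / 4 * (hx i' * hy j' / 4) *
          ∑ r, ∑ s, ∑ r', ∑ s', w r * w s * w r' * w s' *
            K i j r s i' j' r' s' * ρ τ i j r s * ρ τ i' j' r' s')
      (nodalQuad hx hy w fun i j r s => (deriv H (ρ t i j r s) + V i j r s +
        ∑ i', ∑ j', hx i' * hy j' / 4 * ∑ r', ∑ s', w r' * w s' * K i j r s i' j' r' s' *
          ρ t i' j' r' s') * ρ' i j r s) t := by
  refine ((hasDerivAt_nodalQuad fun i j r s =>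
    ((hH _).hasDerivAt.comp t (hρ i j r s)).add ((hρ i j r s).const_mul _)).add
      (hasDerivAt_interactionEnergy hK hρ)).congr_deriv ?_
  rw [← nodalQuad_add]
  congr 1
  funext i j r s
  ring

end Entropy

theorem interface_dissipation_nonneg {ι κ ν : Type*} [Fintype ι] [Fintype κ] [Fintype ν]
    {c : ι → κ → ℝ} (hc : ∀ i j, 0 ≤ c i j) {w : ν → ℝ} (hw : ∀ s, 0 ≤ w s)
    {a : ι → κ → ν → ℝ} (ha : ∀ i j s, 0 ≤ a i j s) {g ψ : ℝ → ℝ} (hgψ : Monovary g ψ)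
    (p q : ι → κ → ν → ℝ) :
    0 ≤ ∑ i, ∑ j, c i j * ∑ s, w s * a i j s * (g (p i j s) - g (q i j s))
      * (ψ (p i j s) - ψ (q i j s)) :=
  Finset.sum_nonneg fun i _ => Finset.sum_nonneg fun j _ => mul_nonneg (hc i j) <|
    Finset.sum_nonneg fun s _ => by
      rw [mul_assoc]
      exact mul_nonneg (mul_nonneg (hw s) (ha i j s)) (hgψ.sub_mul_sub_nonneg _ _)

theorem discrete_entropy_inequality_2d_general
    (k Nx Ny : ℕ) (hk : 1 ≤ k) [NeZero Nx] [NeZero Ny]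
    (hx : ZMod Nx → ℝ) (hhx : ∀ i, 0 < hx i)
    (hy : ZMod Ny → ℝ) (hhy : ∀ j, 0 < hy j)
    (w : Fin (k+1) → ℝ) (hw : ∀ r, 0 < w r)
    (M B D : Matrix (Fin (k+1)) (Fin (k+1)) ℝ)
    (hM : M = Matrix.diagonal w)
    (hB : B = Matrix.diagonal
      (fun r => if r = 0 then (-1 : ℝ) else if r = Fin.last k then 1 else 0))
    (hSBP : M * D + Dᵀ * M = B)
    (H f g : ℝ → ℝ)
    (hH : Differentiable ℝ H) (hH' : StrictMono (deriv H))
    (hf : ∀ s, 0 ≤ f s) (hg : Monotone g)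
    (V : ZMod Nx → ZMod Ny → Fin (k+1) → Fin (k+1) → ℝ)
    (hVx : ∀ i j s, V i j (Fin.last k) s = V (i+1) j 0 s)
    (hVy : ∀ i j r, V i j r (Fin.last k) = V i (j+1) r 0)
    (K : ZMod Nx → ZMod Ny → Fin (k+1) → Fin (k+1) →
         ZMod Nx → ZMod Ny → Fin (k+1) → Fin (k+1) → ℝ)
    (hKsym : ∀ i j r s i' j' r' s',
      K i j r s i' j' r' s' = K i' j' r' s' i j r s)
    (hKsvx : ∀ i j s i' j' r' s',
      K i j (Fin.last k) s i' j' r' s' = K (i+1) j 0 s i' j' r' s')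
    (hKsvy : ∀ i j r i' j' r' s',
      K i j r (Fin.last k) i' j' r' s' = K i (j+1) r 0 i' j' r' s')
    (ρ ρ' : ℝ → ZMod Nx → ZMod Ny → Fin (k+1) → Fin (k+1) → ℝ)
    (hρ : ∀ t i j r s, HasDerivAt (fun τ => ρ τ i j r s) (ρ' t i j r s) t)
    (ξ : ℝ → ZMod Nx → ZMod Ny → Fin (k+1) → Fin (k+1) → ℝ)
    (hξ : ∀ t i j r s, ξ t i j r s = deriv H (ρ t i j r s) + V i j r s +
      ∑ i', ∑ j', (hx i' * hy j' / 4) *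
        ∑ r', ∑ s', w r' * w s' * K i j r s i' j' r' s' * ρ t i' j' r' s')
    -- central fluxes at x- and y-interfaces
    (ξhatx : ℝ → ZMod Nx → ZMod Ny → Fin (k+1) → ℝ)
    (hξhatx : ∀ t i j s, ξhatx t i j s
      = (ξ t i j (Fin.last k) s + ξ t (i+1) j 0 s) / 2)
    (ξhaty : ℝ → ZMod Nx → ZMod Ny → Fin (k+1) → ℝ)
    (hξhaty : ∀ t i j r, ξhaty t i j r
      = (ξ t i j r (Fin.last k) + ξ t i (j+1) r 0) / 2)
    -- discrete velocities, columnwise in x and rowwise in y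
    (ux uy : ℝ → ZMod Nx → ZMod Ny → Fin (k+1) → Fin (k+1) → ℝ)
    (hux : ∀ t i j s, (fun r => ux t i j r s)
      = (2 / hx i) • (M⁻¹ *ᵥ (-((Dᵀ * M) *ᵥ (fun r => ξ t i j r s))
          + B *ᵥ (fun r => if r = 0 then ξhatx t (i-1) j s
              else if r = Fin.last k then ξhatx t i j s else 0))))
    (huy : ∀ t i j r, (fun s => uy t i j r s)
      = (2 / hy j) • (M⁻¹ *ᵥ (-((Dᵀ * M) *ᵥ (fun s => ξ t i j r s))
          + B *ᵥ (fun s => if s = 0 then ξhaty t i (j-1) r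
              else if s = Fin.last k then ξhaty t i j r else 0))))
    (αx αy : ZMod Nx → ZMod Ny → Fin (k+1) → ℝ)
    (hαx : ∀ i j s, 0 ≤ αx i j s) (hαy : ∀ i j r, 0 ≤ αy i j r)
    -- Lax–Friedrichs fluxes
    (Fxhat : ℝ → ZMod Nx → ZMod Ny → Fin (k+1) → ℝ)
    (hFxhat : ∀ t i j s, Fxhat t i j s
      = (f (ρ t (i+1) j 0 s) * ux t (i+1) j 0 s
          + f (ρ t i j (Fin.last k) s) * ux t i j (Fin.last k) s) / 2
        + (αx i j s / 2) * (g (ρ t (i+1) j 0 s) - g (ρ t i j (Fin.last k) s)))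
    (Fyhat : ℝ → ZMod Nx → ZMod Ny → Fin (k+1) → ℝ)
    (hFyhat : ∀ t i j r, Fyhat t i j r
      = (f (ρ t i (j+1) r 0) * uy t i (j+1) r 0
          + f (ρ t i j r (Fin.last k)) * uy t i j r (Fin.last k)) / 2
        + (αy i j r / 2) * (g (ρ t i (j+1) r 0) - g (ρ t i j r (Fin.last k))))
    -- the semi-discrete scheme
    (Xop Yop : ℝ → ZMod Nx → ZMod Ny → Fin (k+1) → Fin (k+1) → ℝ)
    (hX : ∀ t i j s, (fun r => Xop t i j r s)
      = (2 / hx i) • (M⁻¹ *ᵥ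
          (-((Dᵀ * M) *ᵥ (fun r => f (ρ t i j r s) * ux t i j r s))
            + B *ᵥ (fun r => if r = 0 then Fxhat t (i-1) j s
                else if r = Fin.last k then Fxhat t i j s else 0))))
    (hY : ∀ t i j r, (fun s => Yop t i j r s)
      = (2 / hy j) • (M⁻¹ *ᵥ
          (-((Dᵀ * M) *ᵥ (fun s => f (ρ t i j r s) * uy t i j r s))
            + B *ᵥ (fun s => if s = 0 then Fyhat t i (j-1) r
                else if s = Fin.last k then Fyhat t i j r else 0))))
    (hscheme : ∀ t i j r s, ρ' t i j r s = Xop t i j r s + Yop t i j r s)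
    -- the discrete entropy
    (E : ℝ → ℝ)
    (hE : ∀ t, E t
      = (∑ i, ∑ j, (hx i * hy j / 4) *
          ∑ r, ∑ s, w r * w s * (H (ρ t i j r s) + V i j r s * ρ t i j r s))
      + (1/2) * ∑ i, ∑ j, ∑ i', ∑ j',
          (hx i * hy j / 4) * (hx i' * hy j' / 4) *
          ∑ r, ∑ s, ∑ r', ∑ s', w r * w s * w r' * w s' *
            K i j r s i' j' r' s' * ρ t i j r s * ρ t i' j' r' s')
    -- the discrete entropy dissipation and the interface jump terms
    (Idis Jx Jy : ℝ → ℝ)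
    (hIdis : ∀ t, Idis t = ∑ i, ∑ j, (hx i * hy j / 4) *
      ∑ r, ∑ s, w r * w s * f (ρ t i j r s)
        * ((ux t i j r s)^2 + (uy t i j r s)^2))
    (hJx : ∀ t, Jx t = ∑ i, ∑ j, (hy j / 2) * ∑ s, w s * (αx i j s / 2)
      * (g (ρ t (i+1) j 0 s) - g (ρ t i j (Fin.last k) s))
      * (deriv H (ρ t (i+1) j 0 s) - deriv H (ρ t i j (Fin.last k) s)))
    (hJy : ∀ t, Jy t = ∑ i, ∑ j, (hx i / 2) * ∑ r, w r * (αy i j r / 2)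
      * (g (ρ t i (j+1) r 0) - g (ρ t i j r (Fin.last k)))
      * (deriv H (ρ t i (j+1) r 0) - deriv H (ρ t i j r (Fin.last k))))
    (t : ℝ) :
    HasDerivAt E (-(Idis t) - Jx t - Jy t) t
    ∧ -(Idis t) - Jx t - Jy t ≤ -(Idis t)
    ∧ 0 ≤ Idis t := by
  subst hM hB
  have h0 : (0 : Fin (k+1)) ≠ Fin.last k := by
    rw [Ne, Fin.ext_iff, Fin.val_zero, Fin.val_last]; omega
  have hw0 : ∀ r, w r ≠ 0 := fun r => (hw r).ne'
  have hxLines : nodalQuad hx hy w (fun i j r s => ξ t i j r s * Xop t i j r s)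
      = -nodalQuad hx hy w (fun i j r s => f (ρ t i j r s) * ux t i j r s ^ 2) - Jx t := by
    rw [nodalQuad_mul_xFlux h0 hw0 hSBP (fun i => (hhx i).ne') hy (hξhatx t) (hux t)
      (hFxhat t) (hX t), hJx]
    simp only [hξ, hVx, hKsvx, add_sub_add_right_eq_sub, mul_assoc]
  have hyLines : nodalQuad hx hy w (fun i j r s => ξ t i j r s * Yop t i j r s)
      = -nodalQuad hx hy w (fun i j r s => f (ρ t i j r s) * uy t i j r s ^ 2) - Jy t := by
    rw [nodalQuad_mul_yFlux h0 hw0 hSBP hx (fun j => (hhy j).ne') (hξhaty t) (huy t)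
      (hFyhat t) (hY t), hJy]
    simp only [hξ, hVy, hKsvy, add_sub_add_right_eq_sub, mul_assoc]
  have hIdis' : Idis t = nodalQuad hx hy w (fun i j r s => f (ρ t i j r s) * ux t i j r s ^ 2)
      + nodalQuad hx hy w (fun i j r s => f (ρ t i j r s) * uy t i j r s ^ 2) := by
    rw [hIdis, ← nodalQuad_add]
    simp only [nodalQuad, mul_add, mul_assoc]
  have hdE : HasDerivAt E (nodalQuad hx hy w (fun i j r s => ξ t i j r s * Xop t i j r s)
      + nodalQuad hx hy w (fun i j r s => ξ t i j r s * Yop t i j r s)) t := by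
    rw [← nodalQuad_add, funext hE]
    simp only [← mul_add, ← hscheme, hξ]
    exact hasDerivAt_entropy hH hKsym (hρ t)
  have hquad_nonneg := fun (u : ℝ → ZMod Nx → ZMod Ny → Fin (k+1) → Fin (k+1) → ℝ) =>
    nodalQuad_nonneg (hx := hx) (hy := hy) (w := w) (fun i => (hhx i).le) (fun j => (hhy j).le)
      (fun r => (hw r).le) fun i j r s => mul_nonneg (hf (ρ t i j r s)) (sq_nonneg (u t i j r s))
  have hmono : Monovary g (deriv H) := hg.monovary hH'.monotone
  have hJx_nonneg : 0 ≤ Jx t := hJx t ▸ interface_dissipation_nonneg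
    (fun _ j => (half_pos (hhy j)).le) (fun s => (hw s).le)
    (fun i j s => div_nonneg (hαx i j s) zero_le_two) hmono _ _
  have hJy_nonneg : 0 ≤ Jy t := hJy t ▸ interface_dissipation_nonneg
    (fun i _ => (half_pos (hhx i)).le) (fun r => (hw r).le)
    (fun i j r => div_nonneg (hαy i j r) zero_le_two) hmono _ _
  refine ⟨hdE.congr_deriv (by rw [hxLines, hyLines, hIdis']; ring), by linarith,
    hIdis' ▸ add_nonneg (hquad_nonneg ux) (hquad_nonneg uy)⟩

/-- Discrete entropy inequality for the two-dimensional semi-discrete DG scheme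
(Theorem 3.1): along any differentiable solution of the 2D semi-discrete
scheme, the discrete entropy satisfies the exact dissipation identity, hence
`dẼ/dt ≤ −Ĩ` with `Ĩ ≥ 0`. -/
theorem discrete_entropy_inequality_2d
    (k Nx Ny : ℕ) (hk : 1 ≤ k) [NeZero Nx] [NeZero Ny]
    (hNx : 2 ≤ Nx) (hNy : 2 ≤ Ny)
    (hx : ZMod Nx → ℝ) (hhx : ∀ i, 0 < hx i)
    (hy : ZMod Ny → ℝ) (hhy : ∀ j, 0 < hy j)
    (w : Fin (k+1) → ℝ) (hw : ∀ r, 0 < w r)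
    (M B D : Matrix (Fin (k+1)) (Fin (k+1)) ℝ)
    (hM : M = Matrix.diagonal w)
    (hB : B = Matrix.diagonal
      (fun r => if r = 0 then (-1 : ℝ) else if r = Fin.last k then 1 else 0))
    (hSBP : M * D + Dᵀ * M = B)
    (H f g : ℝ → ℝ)
    (hH : Differentiable ℝ H) (hH' : StrictMono (deriv H))
    (hf : ∀ s, 0 ≤ f s) (hg : Monotone g)
    (V : ZMod Nx → ZMod Ny → Fin (k+1) → Fin (k+1) → ℝ)
    (hVx : ∀ i j s, V i j (Fin.last k) s = V (i+1) j 0 s)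
    (hVy : ∀ i j r, V i j r (Fin.last k) = V i (j+1) r 0)
    (K : ZMod Nx → ZMod Ny → Fin (k+1) → Fin (k+1) →
         ZMod Nx → ZMod Ny → Fin (k+1) → Fin (k+1) → ℝ)
    (hKsym : ∀ i j r s i' j' r' s',
      K i j r s i' j' r' s' = K i' j' r' s' i j r s)
    (hKsvx : ∀ i j s i' j' r' s',
      K i j (Fin.last k) s i' j' r' s' = K (i+1) j 0 s i' j' r' s')
    (hKsvy : ∀ i j r i' j' r' s',
      K i j r (Fin.last k) i' j' r' s' = K i (j+1) r 0 i' j' r' s')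
    (ρ ρ' : ℝ → ZMod Nx → ZMod Ny → Fin (k+1) → Fin (k+1) → ℝ)
    (hρ : ∀ t i j r s, HasDerivAt (fun τ => ρ τ i j r s) (ρ' t i j r s) t)
    (ξ : ℝ → ZMod Nx → ZMod Ny → Fin (k+1) → Fin (k+1) → ℝ)
    (hξ : ∀ t i j r s, ξ t i j r s = deriv H (ρ t i j r s) + V i j r s +
      ∑ i', ∑ j', (hx i' * hy j' / 4) *
        ∑ r', ∑ s', w r' * w s' * K i j r s i' j' r' s' * ρ t i' j' r' s')
    -- central fluxes at x- and y-interfaces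
    (ξhatx : ℝ → ZMod Nx → ZMod Ny → Fin (k+1) → ℝ)
    (hξhatx : ∀ t i j s, ξhatx t i j s
      = (ξ t i j (Fin.last k) s + ξ t (i+1) j 0 s) / 2)
    (ξhaty : ℝ → ZMod Nx → ZMod Ny → Fin (k+1) → ℝ)
    (hξhaty : ∀ t i j r, ξhaty t i j r
      = (ξ t i j r (Fin.last k) + ξ t i (j+1) r 0) / 2)
    -- discrete velocities, columnwise in x and rowwise in y
    (ux uy : ℝ → ZMod Nx → ZMod Ny → Fin (k+1) → Fin (k+1) → ℝ)
    (hux : ∀ t i j s, (fun r => ux t i j r s)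
      = (2 / hx i) • (M⁻¹ *ᵥ (-((Dᵀ * M) *ᵥ (fun r => ξ t i j r s))
          + B *ᵥ (fun r => if r = 0 then ξhatx t (i-1) j s
              else if r = Fin.last k then ξhatx t i j s else 0))))
    (huy : ∀ t i j r, (fun s => uy t i j r s)
      = (2 / hy j) • (M⁻¹ *ᵥ (-((Dᵀ * M) *ᵥ (fun s => ξ t i j r s))
          + B *ᵥ (fun s => if s = 0 then ξhaty t i (j-1) r
              else if s = Fin.last k then ξhaty t i j r else 0))))
    (αx αy : ZMod Nx → ZMod Ny → Fin (k+1) → ℝ)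
    (hαx : ∀ i j s, 0 ≤ αx i j s) (hαy : ∀ i j r, 0 ≤ αy i j r)
    -- Lax–Friedrichs fluxes
    (Fxhat : ℝ → ZMod Nx → ZMod Ny → Fin (k+1) → ℝ)
    (hFxhat : ∀ t i j s, Fxhat t i j s
      = (f (ρ t (i+1) j 0 s) * ux t (i+1) j 0 s
          + f (ρ t i j (Fin.last k) s) * ux t i j (Fin.last k) s) / 2
        + (αx i j s / 2) * (g (ρ t (i+1) j 0 s) - g (ρ t i j (Fin.last k) s)))
    (Fyhat : ℝ → ZMod Nx → ZMod Ny → Fin (k+1) → ℝ)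
    (hFyhat : ∀ t i j r, Fyhat t i j r
      = (f (ρ t i (j+1) r 0) * uy t i (j+1) r 0
          + f (ρ t i j r (Fin.last k)) * uy t i j r (Fin.last k)) / 2
        + (αy i j r / 2) * (g (ρ t i (j+1) r 0) - g (ρ t i j r (Fin.last k))))
    -- the semi-discrete scheme
    (Xop Yop : ℝ → ZMod Nx → ZMod Ny → Fin (k+1) → Fin (k+1) → ℝ)
    (hX : ∀ t i j s, (fun r => Xop t i j r s)
      = (2 / hx i) • (M⁻¹ *ᵥ
          (-((Dᵀ * M) *ᵥ (fun r => f (ρ t i j r s) * ux t i j r s))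
            + B *ᵥ (fun r => if r = 0 then Fxhat t (i-1) j s
                else if r = Fin.last k then Fxhat t i j s else 0))))
    (hY : ∀ t i j r, (fun s => Yop t i j r s)
      = (2 / hy j) • (M⁻¹ *ᵥ
          (-((Dᵀ * M) *ᵥ (fun s => f (ρ t i j r s) * uy t i j r s))
            + B *ᵥ (fun s => if s = 0 then Fyhat t i (j-1) r
                else if s = Fin.last k then Fyhat t i j r else 0))))
    (hscheme : ∀ t i j r s, ρ' t i j r s = Xop t i j r s + Yop t i j r s)
    -- the discrete entropy
    (E : ℝ → ℝ)
    (hE : ∀ t, E t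
      = (∑ i, ∑ j, (hx i * hy j / 4) *
          ∑ r, ∑ s, w r * w s * (H (ρ t i j r s) + V i j r s * ρ t i j r s))
      + (1/2) * ∑ i, ∑ j, ∑ i', ∑ j',
          (hx i * hy j / 4) * (hx i' * hy j' / 4) *
          ∑ r, ∑ s, ∑ r', ∑ s', w r * w s * w r' * w s' *
            K i j r s i' j' r' s' * ρ t i j r s * ρ t i' j' r' s')
    -- the discrete entropy dissipation and the interface jump terms
    (Idis Jx Jy : ℝ → ℝ)
    (hIdis : ∀ t, Idis t = ∑ i, ∑ j, (hx i * hy j / 4) *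
      ∑ r, ∑ s, w r * w s * f (ρ t i j r s)
        * ((ux t i j r s)^2 + (uy t i j r s)^2))
    (hJx : ∀ t, Jx t = ∑ i, ∑ j, (hy j / 2) * ∑ s, w s * (αx i j s / 2)
      * (g (ρ t (i+1) j 0 s) - g (ρ t i j (Fin.last k) s))
      * (deriv H (ρ t (i+1) j 0 s) - deriv H (ρ t i j (Fin.last k) s)))
    (hJy : ∀ t, Jy t = ∑ i, ∑ j, (hx i / 2) * ∑ r, w r * (αy i j r / 2)
      * (g (ρ t i (j+1) r 0) - g (ρ t i j r (Fin.last k)))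
      * (deriv H (ρ t i (j+1) r 0) - deriv H (ρ t i j r (Fin.last k))))
    (t : ℝ) :
    HasDerivAt E (-(Idis t) - Jx t - Jy t) t
    ∧ -(Idis t) - Jx t - Jy t ≤ -(Idis t)
    ∧ 0 ≤ Idis t :=
  discrete_entropy_inequality_2d_general k Nx Ny hk hx hhx hy hhy w hw M B D hM hB hSBP H f g hH hH'
    hf hg V hVx hVy K hKsym hKsvx hKsvy ρ ρ' hρ ξ hξ ξhatx hξhatx ξhaty hξhaty ux uy hux huy αx αy
    hαx hαy Fxhat hFxhat Fyhat hFyhat Xop Yop hX hY hscheme E hE Idis Jx Jy hIdis hJx hJy t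
end
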